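/- arXiv:1304.2961 — 8 statements merged into one kernel-verified Lean document; each statement's English description precedes it below -/
import Mathlib

section
/- Let m, n ∈ ℕ+ and let a, b, s ∈ ℕ with a ∣ m, b ∣ n, 0 ≤ s ≤ a−1 and a ∣ (n/b)·s. Then the set V_{a,b,s} = {(i·a + j·s mod m, j·b mod n) : 0 ≤ i ≤ m/a − 1, 0 ≤ j ≤ n/b − 1}, i.e. the subgroup of ℤ_m × ℤ_n generated by (a,0) and (s,b), is a subgroup of ℤ_m × ℤ_n of order mn/(ab). -/
/-!
Put `x = (a, 0)`, `y = (s, b)`, `A = m / a` and `B = n / b`. Then `A • x = 0`, and the hypothesis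
`a ∣ B * s` says exactly that `B • y = (B * s, n) = k • x` for some `k`. So in any integral
combination `i • x + j • y` the coefficient of `y` can be reduced mod `B` at the cost of a multiple
of `x`, and then the coefficient of `x` mod `A`: the subgroup consists of the `i • x + j • y` with
`i < A`, `j < B`. These are pairwise distinct, since `j * b < n` recovers `j` from the second
coordinate and then `i * a < m` recovers `i` from the first; hence the order is `A * B`.
-/

open AddSubgroup

lemma zsmul_eq_toNat_emod_nsmul {G : Type*} [AddGroup G] {x : G} {A : ℕ} (hA : 0 < A)
    (hx : A • x = 0) (z : ℤ) : z • x = (z % A).toNat • x := by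
  have hAx : ((A : ℤ) * (z / A)) • x = 0 := by rw [mul_zsmul', natCast_zsmul, hx, zsmul_zero]
  rw [← natCast_zsmul, Int.toNat_of_nonneg (Int.emod_nonneg z (by omega))]
  conv_lhs => rw [← Int.mul_ediv_add_emod z A, add_zsmul, hAx, zero_add]

section ClosurePair

variable {G : Type*} [AddCommGroup G] {x y : G} {A B k : ℕ}

theorem AddSubgroup.mem_closure_pair_iff_of_nsmul_eq (hA : 0 < A) (hB : 0 < B)
    (hx : A • x = 0) (hy : B • y = k • x) {g : G} :
    g ∈ closure {x, y} ↔ ∃ i < A, ∃ j < B, i • x + j • y = g := by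
  refine ⟨fun hg => ?_, ?_⟩
  · obtain ⟨z₁, z₂, rfl⟩ := mem_closure_pair.1 hg
    have hreduce_y : z₂ • y = (z₂ / B * k) • x + (z₂ % B) • y := by
      conv_lhs => rw [← Int.mul_ediv_add_emod z₂ B]
      rw [add_zsmul, mul_comm, mul_zsmul, natCast_zsmul, hy, ← natCast_zsmul, ← mul_zsmul]
    have hA' : 0 < (A : ℤ) := by omega
    have hB' : 0 < (B : ℤ) := by omega
    have hi := Int.emod_lt_of_pos (z₁ + z₂ / B * k) hA'
    have hj := Int.emod_lt_of_pos z₂ hB'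
    refine ⟨((z₁ + z₂ / B * k) % A).toNat, by omega, (z₂ % B).toNat, by omega, ?_⟩
    rw [hreduce_y, ← add_assoc, ← add_zsmul, zsmul_eq_toNat_emod_nsmul hA hx, ← natCast_zsmul y,
      Int.toNat_of_nonneg (Int.emod_nonneg z₂ hB'.ne')]
  · rintro ⟨i, -, j, -, rfl⟩
    exact add_mem (nsmul_mem (subset_closure (by simp)) i) (nsmul_mem (subset_closure (by simp)) j)

theorem AddSubgroup.card_closure_pair_of_injective (hA : 0 < A) (hB : 0 < B)
    (hx : A • x = 0) (hy : B • y = k • x)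
    (hinj : Function.Injective fun p : Fin A × Fin B => (p.1 : ℕ) • x + (p.2 : ℕ) • y) :
    Nat.card (closure {x, y}) = A * B := by
  have hrange : Set.range (fun p : Fin A × Fin B => (p.1 : ℕ) • x + (p.2 : ℕ) • y) =
      closure {x, y} := by
    ext g
    simp only [Set.mem_range, SetLike.mem_coe, mem_closure_pair_iff_of_nsmul_eq hA hB hx hy]
    constructor
    · rintro ⟨⟨i, j⟩, rfl⟩
      exact ⟨i, i.isLt, j, j.isLt, rfl⟩
    · rintro ⟨i, hi, j, hj, rfl⟩
      exact ⟨⟨⟨i, hi⟩, ⟨j, hj⟩⟩, rfl⟩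
  rw [← SetLike.coe_sort_coe, ← hrange, Nat.card_range_of_injective hinj]
  simp

end ClosurePair

lemma ZMod.natCast_mul_injOn_lt_div {m a i i' : ℕ} (ha : a ∣ m) (hi : i < m / a)
    (hi' : i' < m / a) (h : ((i * a : ℕ) : ZMod m) = ((i' * a : ℕ) : ZMod m)) : i = i' := by
  have hlt : i * a < m := mul_comm a i ▸ (Nat.lt_div_iff_mul_lt' ha i).1 hi
  have hlt' : i' * a < m := mul_comm a i' ▸ (Nat.lt_div_iff_mul_lt' ha i').1 hi'
  rw [ZMod.natCast_eq_natCast_iff', Nat.mod_eq_of_lt hlt, Nat.mod_eq_of_lt hlt'] at h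
  exact Nat.eq_of_mul_eq_mul_right (Nat.pos_of_ne_zero (by rintro rfl; simp at hi)) h

section Generators

variable {m n a b s : ℕ}

lemma nsmul_add_nsmul_pair (i j : ℕ) :
    i • ((a : ZMod m), (0 : ZMod n)) + j • ((s : ZMod m), (b : ZMod n)) =
      (((i * a + j * s : ℕ) : ZMod m), ((j * b : ℕ) : ZMod n)) := by
  ext <;> simp

lemma div_nsmul_pair_fst (ha : a ∣ m) : (m / a) • ((a : ZMod m), (0 : ZMod n)) = 0 := by
  ext <;> simp [← Nat.cast_mul, Nat.div_mul_cancel ha]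

lemma div_nsmul_pair_snd {k : ℕ} (hb : b ∣ n) (hk : n / b * s = a * k) :
    (n / b) • ((s : ZMod m), (b : ZMod n)) = k • ((a : ZMod m), (0 : ZMod n)) := by
  ext
  · rw [Prod.smul_fst, Prod.smul_fst, nsmul_eq_mul, nsmul_eq_mul, ← Nat.cast_mul, ← Nat.cast_mul,
      hk, mul_comm k]
  · simp [← Nat.cast_mul, Nat.div_mul_cancel hb]

lemma injective_nsmul_add_nsmul_pair (ha : a ∣ m) (hb : b ∣ n) :
    Function.Injective fun p : Fin (m / a) × Fin (n / b) =>
      (p.1 : ℕ) • ((a : ZMod m), (0 : ZMod n)) + (p.2 : ℕ) • ((s : ZMod m), (b : ZMod n)) := by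
  rintro ⟨i, j⟩ ⟨i', j'⟩ h
  simp only [nsmul_add_nsmul_pair, Prod.mk.injEq] at h
  have hj : (j : ℕ) = j' := ZMod.natCast_mul_injOn_lt_div hb j.isLt j'.isLt h.2
  rw [hj, Nat.cast_add, Nat.cast_add, add_left_inj] at h
  have hi : (i : ℕ) = i' := ZMod.natCast_mul_injOn_lt_div ha i.isLt i'.isLt h.1
  rw [Fin.ext hi, Fin.ext hj]

end Generators

theorem subgroup_Vabs_general (m n : ℕ) (hm : 0 < m) (hn : 0 < n) (a b s : ℕ)
    (ha : a ∣ m) (hb : b ∣ n) (hdvd : a ∣ (n / b) * s) :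
    ((AddSubgroup.closure {((a : ZMod m), (0 : ZMod n)), ((s : ZMod m), (b : ZMod n))} :
        AddSubgroup (ZMod m × ZMod n)) : Set (ZMod m × ZMod n)) =
      {p : ZMod m × ZMod n | ∃ i j : ℕ, i ≤ m / a - 1 ∧ j ≤ n / b - 1 ∧
        p = (((i * a + j * s : ℕ) : ZMod m), ((j * b : ℕ) : ZMod n))} ∧
    Nat.card (AddSubgroup.closure {((a : ZMod m), (0 : ZMod n)), ((s : ZMod m), (b : ZMod n))} :
        AddSubgroup (ZMod m × ZMod n)) = m * n / (a * b) := by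
  have hA : 0 < m / a := Nat.div_pos (Nat.le_of_dvd hm ha) (Nat.pos_of_dvd_of_pos ha hm)
  have hB : 0 < n / b := Nat.div_pos (Nat.le_of_dvd hn hb) (Nat.pos_of_dvd_of_pos hb hn)
  obtain ⟨k, hk⟩ := hdvd
  have hx := div_nsmul_pair_fst (n := n) ha
  have hy := div_nsmul_pair_snd (m := m) hb hk
  refine ⟨?_, ?_⟩
  · ext p
    simp only [SetLike.mem_coe, mem_closure_pair_iff_of_nsmul_eq hA hB hx hy,
      nsmul_add_nsmul_pair, Set.mem_ofPred_eq]
    constructor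
    · rintro ⟨i, hi, j, hj, rfl⟩
      exact ⟨i, j, by omega, by omega, rfl⟩
    · rintro ⟨i, j, hi, hj, rfl⟩
      exact ⟨i, by omega, j, by omega, rfl⟩
  · rw [card_closure_pair_of_injective hA hB hx hy (injective_nsmul_add_nsmul_pair ha hb),
      Nat.div_mul_div_comm ha hb]

/-- For `m, n ∈ ℕ+`, `a ∣ m`, `b ∣ n`, `0 ≤ s ≤ a-1` with `a ∣ (n/b)·s`, the subgroup
`V_{a,b,s}` of `ℤ_m × ℤ_n` generated by `(a,0)` and `(s,b)` is the set
`{(i·a + j·s, j·b) : 0 ≤ i ≤ m/a - 1, 0 ≤ j ≤ n/b - 1}` and has order `mn/(ab)`. -/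
theorem subgroup_Vabs (m n : ℕ) (hm : 0 < m) (hn : 0 < n) (a b s : ℕ)
    (ha : a ∣ m) (hb : b ∣ n) (hs : s ≤ a - 1) (hdvd : a ∣ (n / b) * s) :
    ((AddSubgroup.closure {((a : ZMod m), (0 : ZMod n)), ((s : ZMod m), (b : ZMod n))} :
        AddSubgroup (ZMod m × ZMod n)) : Set (ZMod m × ZMod n)) =
      {p : ZMod m × ZMod n | ∃ i j : ℕ, i ≤ m / a - 1 ∧ j ≤ n / b - 1 ∧
        p = (((i * a + j * s : ℕ) : ZMod m), ((j * b : ℕ) : ZMod n))} ∧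
    Nat.card (AddSubgroup.closure {((a : ZMod m), (0 : ZMod n)), ((s : ZMod m), (b : ZMod n))} :
        AddSubgroup (ZMod m × ZMod n)) = m * n / (a * b) :=
  subgroup_Vabs_general m n hm hn a b s ha hb hdvd
end

section
/- Let m, n ∈ ℕ+ and let I_{m,n} = {(a,b,s) ∈ ℕ² × ℕ₀ : a ∣ m, b ∣ n, 0 ≤ s ≤ a−1 and a ∣ (n/b)·s}. Then the map (a,b,s) ↦ V_{a,b,s}, where V_{a,b,s} is the subgroup of ℤ_m × ℤ_n generated by (a,0) and (s,b), is a bijection between the set I_{m,n} and the set of all subgroups of ℤ_m × ℤ_n. -/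
/-!
A subgroup `H ≤ G × K` is recovered from three pieces of data: its image `zmultiples y` under
the second projection, its intersection `zmultiples x` with `G × 0`, and one lift `(z, y) ∈ H`;
then `H = ⟨(x, 0), (z, y)⟩`. Conversely `⟨(x, 0), (z, y)⟩` meets `G × 0` exactly in
`zmultiples x` iff `addOrderOf y • z ∈ zmultiples x`, which for `G × K = ℤ_m × ℤ_n` and
`y = b ∣ n` is the condition `a ∣ (n / b) s`. Subgroups of `ℤ_m` are the `⟨d⟩` with `d ∣ m`,
determined by `d`, so `a` and `b` are determined by `H`, and the lift is unique modulo `a`,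
which pins down `s ∈ [0, a)`.
-/

open AddSubgroup

section Product

variable {G K : Type*} [AddCommGroup G] [AddCommGroup K]

theorem AddSubgroup.map_snd_closure_pair (x z : G) (y : K) :
    (closure {(x, 0), (z, y)}).map (AddMonoidHom.snd G K) = zmultiples y := by
  ext w
  simp only [mem_map, mem_closure_pair, mem_zmultiples_iff, AddMonoidHom.coe_snd]
  constructor
  · rintro ⟨_, ⟨i, j, rfl⟩, rfl⟩
    exact ⟨j, by simp⟩
  · rintro ⟨j, rfl⟩
    exact ⟨_, ⟨0, j, rfl⟩, by simp⟩

theorem AddSubgroup.comap_inl_closure_pair_eq_zmultiples_iff (x z : G) (y : K) :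
    (closure {(x, 0), (z, y)}).comap (AddMonoidHom.inl G K) = zmultiples x ↔
      addOrderOf y • z ∈ zmultiples x := by
  constructor
  · intro h
    rw [← h, mem_comap, AddMonoidHom.inl_apply]
    convert nsmul_mem (subset_closure (by simp) : (z, y) ∈ closure {(x, 0), (z, y)})
      (addOrderOf y) using 1
    simp
  · intro h
    ext w
    simp only [mem_comap, AddMonoidHom.inl_apply, mem_closure_pair]
    constructor
    · rintro ⟨i, j, hij⟩
      obtain ⟨hw, hj⟩ := Prod.ext_iff.1 hij
      simp only [Prod.fst_add, Prod.smul_fst, Prod.snd_add, Prod.smul_snd, smul_zero,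
        zero_add] at hw hj
      obtain ⟨l, rfl⟩ := addOrderOf_dvd_iff_zsmul_eq_zero.2 hj
      rw [← hw, mul_comm, mul_zsmul, natCast_zsmul]
      exact add_mem (zsmul_mem (mem_zmultiples x) i) (zsmul_mem h l)
    · rintro ⟨i, rfl⟩
      exact ⟨i, 0, by simp⟩

theorem AddSubgroup.closure_pair_eq_of_map_snd_of_comap_inl {H : AddSubgroup (G × K)}
    {x z : G} {y : K} (hsnd : H.map (AddMonoidHom.snd G K) = zmultiples y)
    (hinl : H.comap (AddMonoidHom.inl G K) = zmultiples x) (hzy : (z, y) ∈ H) :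
    closure {(x, 0), (z, y)} = H := by
  have hx : (x, (0 : K)) ∈ H := by
    simpa using (hinl ▸ mem_zmultiples x : x ∈ H.comap (AddMonoidHom.inl G K))
  refine le_antisymm ((closure_le H).2 (by simp [Set.insert_subset_iff, hx, hzy])) ?_
  rintro ⟨w, v⟩ hwv
  obtain ⟨j, rfl⟩ : ∃ j : ℤ, j • y = v := by
    rw [← mem_zmultiples_iff, ← hsnd]
    exact mem_map_of_mem _ hwv
  obtain ⟨i, hi⟩ : ∃ i : ℤ, i • x = w - j • z := by
    rw [← mem_zmultiples_iff, ← hinl, mem_comap, AddMonoidHom.inl_apply]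
    simpa using sub_mem hwv (zsmul_mem hzy j)
  exact mem_closure_pair.2 ⟨i, j, by simp [hi]⟩

end Product

namespace ZMod

theorem intCast_mem_zmultiples_natCast_iff {m d : ℕ} (hd : d ∣ m) (c : ℤ) :
    (c : ZMod m) ∈ zmultiples (d : ZMod m) ↔ (d : ℤ) ∣ c := by
  rw [mem_zmultiples_iff]
  constructor
  · rintro ⟨k, hk⟩
    have hm : (m : ℤ) ∣ k * d - c := by
      rw [← intCast_zmod_eq_zero_iff_dvd]
      push_cast
      rw [← zsmul_eq_mul, hk, sub_self]
    exact (dvd_sub_right (dvd_mul_left _ _)).1 ((Int.natCast_dvd_natCast.2 hd).trans hm)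
  · rintro ⟨k, rfl⟩
    exact ⟨k, by push_cast; ring⟩

theorem natCast_mem_zmultiples_natCast_iff {m d : ℕ} (hd : d ∣ m) (c : ℕ) :
    (c : ZMod m) ∈ zmultiples (d : ZMod m) ↔ d ∣ c := by
  simpa [Int.natCast_dvd_natCast] using intCast_mem_zmultiples_natCast_iff hd c

theorem eq_of_zmultiples_natCast_eq {m d d' : ℕ} (hd : d ∣ m) (hd' : d' ∣ m)
    (h : zmultiples (d : ZMod m) = zmultiples (d' : ZMod m)) : d = d' :=
  Nat.dvd_antisymm ((natCast_mem_zmultiples_natCast_iff hd d').1 (h ▸ mem_zmultiples _))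
    ((natCast_mem_zmultiples_natCast_iff hd' d).1 (h.symm ▸ mem_zmultiples _))

theorem eq_of_natCast_sub_mem_zmultiples {m a s s' : ℕ} (ha : a ∣ m) (hs : s < a) (hs' : s' < a)
    (h : (s : ZMod m) - s' ∈ zmultiples (a : ZMod m)) : s' = s := by
  have : (a : ℤ) ∣ s - s' := by
    rw [← intCast_mem_zmultiples_natCast_iff ha]
    simpa using h
  exact Nat.ModEq.eq_of_lt_of_lt (Nat.modEq_iff_dvd.2 this) hs' hs

theorem exists_dvd_and_eq_zmultiples (n : ℕ) (H : AddSubgroup (ZMod n)) :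
    ∃ d : ℕ, d ∣ n ∧ H = zmultiples (d : ZMod n) := by
  obtain ⟨g, hg⟩ := Int.subgroup_cyclic (H.comap (Int.castAddHom (ZMod n)))
  rw [← zmultiples_eq_closure, ← Int.zmultiples_natAbs] at hg
  have hn : (n : ℤ) ∈ H.comap (Int.castAddHom (ZMod n)) := by simp
  refine ⟨g.natAbs, ?_, ?_⟩
  · rw [hg, Int.mem_zmultiples_iff] at hn
    exact_mod_cast hn
  · rw [← map_comap_eq_self_of_surjective (f := Int.castAddHom (ZMod n)) intCast_surjective H, hg, AddMonoidHom.map_zmultiples]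
    simp

theorem addOrderOf_natCast_of_dvd {n b : ℕ} (hn : n ≠ 0) (hb : b ∣ n) :
    addOrderOf (b : ZMod n) = n / b := by
  rw [addOrderOf_coe _ hn, Nat.gcd_eq_right hb]

theorem comap_inl_closure_pair_natCast_iff {m n a b : ℕ} (hn : n ≠ 0) (ha : a ∣ m) (hb : b ∣ n)
    (s : ℕ) :
    (AddSubgroup.closure {((a : ZMod m), (0 : ZMod n)), ((s : ZMod m), (b : ZMod n))}).comap
        (AddMonoidHom.inl (ZMod m) (ZMod n)) = zmultiples (a : ZMod m) ↔ a ∣ n / b * s := by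
  rw [comap_inl_closure_pair_eq_zmultiples_iff, addOrderOf_natCast_of_dvd hn hb, nsmul_eq_mul,
    ← Nat.cast_mul, natCast_mem_zmultiples_natCast_iff ha]

theorem closure_pair_natCast_inj {m n a b s a' b' s' : ℕ} (hn : n ≠ 0)
    (ha : a ∣ m) (hb : b ∣ n) (hs : s < a) (hdvd : a ∣ n / b * s)
    (ha' : a' ∣ m) (hb' : b' ∣ n) (hs' : s' < a') (hdvd' : a' ∣ n / b' * s')
    (h : AddSubgroup.closure {((a : ZMod m), (0 : ZMod n)), ((s : ZMod m), (b : ZMod n))} =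
      AddSubgroup.closure {((a' : ZMod m), (0 : ZMod n)), ((s' : ZMod m), (b' : ZMod n))}) :
    a = a' ∧ b = b' ∧ s = s' := by
  obtain rfl : b = b' := eq_of_zmultiples_natCast_eq hb hb' <| by
    simpa only [map_snd_closure_pair] using congrArg (map (AddMonoidHom.snd _ _)) h
  have hinl := (comap_inl_closure_pair_natCast_iff hn ha' hb s').2 hdvd'
  obtain rfl : a = a' := eq_of_zmultiples_natCast_eq ha ha' <| by
    rw [← (comap_inl_closure_pair_natCast_iff hn ha hb s).2 hdvd, ← hinl, h]
  have hsub : (s : ZMod m) - s' ∈ zmultiples (a : ZMod m) := by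
    have hsV : ((s : ZMod m), (b : ZMod n)) ∈
        AddSubgroup.closure {((a : ZMod m), (0 : ZMod n)), ((s' : ZMod m), (b : ZMod n))} :=
      h ▸ AddSubgroup.subset_closure (by simp)
    rw [← hinl, mem_comap, AddMonoidHom.inl_apply]
    simpa using sub_mem hsV (AddSubgroup.subset_closure (Set.mem_insert_of_mem _ rfl))
  exact ⟨rfl, rfl, (eq_of_natCast_sub_mem_zmultiples ha hs hs' hsub).symm⟩

theorem exists_closure_pair_natCast_eq {m n : ℕ} (hm : m ≠ 0) (hn : n ≠ 0)
    (H : AddSubgroup (ZMod m × ZMod n)) :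
    ∃ a b s : ℕ, a ∣ m ∧ b ∣ n ∧ s < a ∧ a ∣ n / b * s ∧
      AddSubgroup.closure {((a : ZMod m), (0 : ZMod n)), ((s : ZMod m), (b : ZMod n))} = H := by
  have : NeZero m := ⟨hm⟩
  obtain ⟨b, hb, hsnd⟩ := exists_dvd_and_eq_zmultiples n (H.map (AddMonoidHom.snd _ _))
  obtain ⟨a, ha, hinl⟩ := exists_dvd_and_eq_zmultiples m (H.comap (AddMonoidHom.inl _ _))
  obtain ⟨⟨t, _⟩, htH, rfl⟩ := mem_map.1 (hsnd ▸ mem_zmultiples (b : ZMod n))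
  have haH : ((a : ZMod m), (0 : ZMod n)) ∈ H := by
    simpa using (hinl ▸ mem_zmultiples _ : (a : ZMod m) ∈ H.comap (AddMonoidHom.inl _ _))
  have hsH : (((t.val % a : ℕ) : ZMod m), (b : ZMod n)) ∈ H := by
    convert sub_mem htH (nsmul_mem haH (t.val / a)) using 1
    refine Prod.ext ?_ (by simp)
    rw [Prod.fst_sub, Prod.smul_fst, eq_sub_iff_add_eq, nsmul_eq_mul, ← Nat.cast_mul,
      ← Nat.cast_add, Nat.mod_add_div', natCast_zmod_val]
  have hV := closure_pair_eq_of_map_snd_of_comap_inl hsnd hinl hsH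
  refine ⟨a, b, t.val % a, ha, hb, Nat.mod_lt _ (Nat.pos_of_dvd_of_pos ha hm.bot_lt), ?_, hV⟩
  exact (comap_inl_closure_pair_natCast_iff hn ha hb _).1 (hV ▸ hinl)

end ZMod

/-- The map `(a,b,s) ↦ V_{a,b,s}` (with `V_{a,b,s}` the subgroup of `ℤ_m × ℤ_n` generated by
`(a,0)` and `(s,b)`) is a bijection between
`I_{m,n} = {(a,b,s) : a ∣ m, b ∣ n, 0 ≤ s ≤ a-1, a ∣ (n/b)·s}` and the set of all
subgroups of `ℤ_m × ℤ_n`. -/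
theorem bijective_Vabs (m n : ℕ) (hm : 0 < m) (hn : 0 < n) :
    Function.Bijective
      (fun x : {x : ℕ × ℕ × ℕ //
          x.1 ∣ m ∧ x.2.1 ∣ n ∧ x.2.2 ≤ x.1 - 1 ∧ x.1 ∣ (n / x.2.1) * x.2.2} =>
        (AddSubgroup.closure
          {((x.1.1 : ZMod m), (0 : ZMod n)), ((x.1.2.2 : ZMod m), (x.1.2.1 : ZMod n))} :
          AddSubgroup (ZMod m × ZMod n))) := by
  constructor
  · rintro ⟨⟨a, b, s⟩, ha, hb, hs, hdvd⟩ ⟨⟨a', b', s'⟩, ha', hb', hs', hdvd'⟩ h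
    dsimp only at h ha hb hs hdvd ha' hb' hs' hdvd'
    have ha0 : 0 < a := Nat.pos_of_dvd_of_pos ha hm
    have ha0' : 0 < a' := Nat.pos_of_dvd_of_pos ha' hm
    obtain ⟨rfl, rfl, rfl⟩ := ZMod.closure_pair_natCast_inj hn.ne' ha hb (by omega) hdvd
      ha' hb' (by omega) hdvd' h
    rfl
  · intro H
    obtain ⟨a, b, s, ha, hb, hs, hdvd, hV⟩ := ZMod.exists_closure_pair_natCast_eq hm.ne' hn.ne' H
    exact ⟨⟨(a, b, s), ha, hb, Nat.le_sub_one_of_lt hs, hdvd⟩, hV⟩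
end

section
/- Let (G,+) be a finite Abelian group, q ∈ ℕ+, H a subgroup of G, d a positive divisor of q, and α ∈ G with (q/d)·α ∈ H. Then the set V_{H,α,d} = {(k·α + β, k·d mod q) : 0 ≤ k ≤ q/d − 1, β ∈ H} is a subgroup of G × ℤ_q of order (q/d)·|H|. -/
/-!
`V_{H,α,d}` is the subgroup generated by `H × 0` and `(α, d)`. Since `d` has order `m = q/d`
in `ℤ_q` and `m • (α, d) = (m • α, 0) ∈ H × 0`, any multiple `n • (α, d)` reduces to
`k • (α, d)` with `k = n mod m` modulo `H × 0`. This gives the normal form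
`(k • α + β, k • d)` with `k < m`, `β ∈ H`, which is unique because `k ↦ k • d` is
injective below the order of `d`; hence `|V| = m |H|`.
-/

open AddSubgroup

section
variable {A : Type*} [AddCommGroup A]

lemma AddSubgroup.exists_lt_sub_nsmul_mem (L : AddSubgroup A) {a : A} {m : ℕ} (hm : 0 < m)
    (ha : m • a ∈ L) (n : ℤ) : ∃ k < m, n • a - k • a ∈ L := by
  have hk : (((n % m).toNat : ℕ) : ℤ) = n % m :=
    Int.toNat_of_nonneg (Int.emod_nonneg _ (by omega))
  refine ⟨(n % m).toNat, by have := Int.emod_lt_of_pos n (by omega : (0 : ℤ) < m); omega, ?_⟩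
  have hdiv : n • a - (n % m).toNat • a = (n / m) • (m • a) := by
    rw [← natCast_zsmul, hk, ← natCast_zsmul, ← mul_zsmul, sub_eq_iff_eq_add, ← add_zsmul,
      Int.ediv_mul_add_emod]
  rw [hdiv]
  exact L.zsmul_mem ha _

lemma AddSubgroup.mem_sup_zmultiples_iff (L : AddSubgroup A) {a : A} {m : ℕ} (hm : 0 < m)
    (ha : m • a ∈ L) {p : A} :
    p ∈ L ⊔ zmultiples a ↔ ∃ k < m, ∃ β ∈ L, p = β + k • a := by
  rw [mem_sup]
  constructor
  · rintro ⟨β, hβ, _, ⟨n, rfl⟩, rfl⟩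
    obtain ⟨k, hk, hn⟩ := L.exists_lt_sub_nsmul_mem hm ha n
    exact ⟨k, hk, β + (n • a - k • a), L.add_mem hβ hn, by abel⟩
  · rintro ⟨k, -, β, hβ, rfl⟩
    exact ⟨β, hβ, k • a, nsmul_mem (mem_zmultiples a) k, rfl⟩

end

section
variable {G K : Type*} [AddCommGroup G] [AddCommGroup K]

lemma AddSubgroup.coe_prod_bot_sup_zmultiples (H : AddSubgroup G) {α : G} {x : K}
    (hx : 0 < addOrderOf x) (hα : addOrderOf x • α ∈ H) :
    ((H.prod ⊥ ⊔ zmultiples (α, x) : AddSubgroup (G × K)) : Set (G × K)) =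
      (fun p : ℕ × G => (p.1 • α + p.2, p.1 • x)) '' (Set.Iio (addOrderOf x) ×ˢ H) := by
  have hm : addOrderOf x • (α, x) ∈ H.prod ⊥ := by
    simpa [mem_prod, Prod.smul_mk, addOrderOf_nsmul_eq_zero] using hα
  ext p
  rw [SetLike.mem_coe, (H.prod ⊥).mem_sup_zmultiples_iff (A := G × K) hx hm]
  simp only [Set.mem_image, Set.mem_prod, Set.mem_Iio, SetLike.mem_coe, Prod.exists, mem_prod,
    mem_bot]
  constructor
  · rintro ⟨k, hk, β, _, ⟨hβ, rfl⟩, rfl⟩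
    exact ⟨k, β, ⟨hk, hβ⟩, by ext <;> simp [add_comm]⟩
  · rintro ⟨k, β, ⟨hk, hβ⟩, rfl⟩
    exact ⟨k, hk, β, 0, ⟨hβ, rfl⟩, by ext <;> simp [add_comm]⟩

lemma AddSubgroup.card_prod_bot_sup_zmultiples (H : AddSubgroup G) {α : G} {x : K}
    (hx : 0 < addOrderOf x) (hα : addOrderOf x • α ∈ H) :
    Nat.card (H.prod ⊥ ⊔ zmultiples (α, x) : AddSubgroup (G × K)) =
      addOrderOf x * Nat.card H := by
  have hinj : Set.InjOn (fun p : ℕ × G => (p.1 • α + p.2, p.1 • x))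
      (Set.Iio (addOrderOf x) ×ˢ H) := by
    rintro ⟨k, β⟩ ⟨hk, -⟩ ⟨k', β'⟩ ⟨hk', -⟩ h
    simp only [Prod.mk.injEq] at h
    obtain rfl : k = k' := nsmul_injOn_Iio_addOrderOf hk hk' h.2
    simpa using h.1
  rw [← SetLike.coe_sort_coe, H.coe_prod_bot_sup_zmultiples hx hα, Nat.card_image_of_injOn hinj,
    Nat.card_congr (Equiv.Set.prod _ _), Nat.card_prod, Nat.card_eq_card_toFinset,
    Set.toFinset_Iio, Nat.card_Iio]
  rfl

end

theorem subgroup_VHad_general {G : Type*} [AddCommGroup G] (q : ℕ) (hq : 0 < q)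
    (H : AddSubgroup G) (d : ℕ) (hd : d ∣ q) (α : G) (hα : (q / d) • α ∈ H) :
    ∃ V : AddSubgroup (G × ZMod q),
      (V : Set (G × ZMod q)) =
        {p : G × ZMod q | ∃ k : ℕ, k ≤ q / d - 1 ∧ ∃ β ∈ H,
          p = (k • α + β, ((k * d : ℕ) : ZMod q))} ∧
      Nat.card V = (q / d) * Nat.card H := by
  have hord : addOrderOf (d : ZMod q) = q / d := by
    rw [ZMod.addOrderOf_coe _ hq.ne', Nat.gcd_eq_right hd]
  have hpos : 0 < q / d := Nat.div_pos (Nat.le_of_dvd hq hd) (Nat.pos_of_dvd_of_pos hd hq)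
  rw [← hord] at hα hpos ⊢
  refine ⟨H.prod ⊥ ⊔ zmultiples (α, (d : ZMod q)), ?_,
    H.card_prod_bot_sup_zmultiples hpos hα⟩
  rw [H.coe_prod_bot_sup_zmultiples hpos hα]
  ext p
  simp [Nat.le_sub_one_iff_lt hpos, eq_comm, and_assoc]

/-- For a finite Abelian group `G`, `q ∈ ℕ+`, `H ≤ G`, `d ∣ q` and `α ∈ G` with
`(q/d)·α ∈ H`, the set `V_{H,α,d} = {(k·α + β, k·d) : 0 ≤ k ≤ q/d - 1, β ∈ H}` is a
subgroup of `G × ℤ_q` of order `(q/d)·|H|`. -/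
theorem subgroup_VHad {G : Type*} [AddCommGroup G] [Fintype G] (q : ℕ) (hq : 0 < q)
    (H : AddSubgroup G) (d : ℕ) (hd : d ∣ q) (α : G) (hα : (q / d) • α ∈ H) :
    ∃ V : AddSubgroup (G × ZMod q),
      (V : Set (G × ZMod q)) =
        {p : G × ZMod q | ∃ k : ℕ, k ≤ q / d - 1 ∧ ∃ β ∈ H,
          p = (k • α + β, ((k * d : ℕ) : ZMod q))} ∧
      Nat.card V = (q / d) * Nat.card H :=
  subgroup_VHad_general q hq H d hd α hα
end

section
/- Let m, n, r ∈ ℕ+ and let a ∣ m, b ∣ n, c ∣ r. Set A = gcd(a, n/b), B = gcd(b, r/c), C = gcd(a, r/c), X = ABC / gcd(a·(r/c), ABC). Let t with 0 ≤ t ≤ A−1 and s = a·t/A; let w with 0 ≤ w ≤ B·gcd(t,X)/X − 1 and v = b·X·w/(B·gcd(t,X)); let u₀ be a solution of the linear congruence (r/c)·u ≡ r·v·s/(b·c) (mod a), and let u = u₀ + a·z/C with 0 ≤ z ≤ C−1. Then the set U_{a,b,c,t,w,z} = {(i·a + j·s + k·u mod m, j·b + k·v mod n, k·c mod r) : 0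 ≤ i ≤ m/a − 1, 0 ≤ j ≤ n/b − 1, 0 ≤ k ≤ r/c − 1}, i.e. the subgroup of ℤ_m × ℤ_n × ℤ_r generated by (a,0,0), (s,b,0), (u,v,c), is a subgroup of ℤ_m × ℤ_n × ℤ_r of order mnr/(abc). -/
/-!
Write `N = m/a`, `P = n/b`, `Q = r/c` and `x = (a,0,0)`, `y = (s,b,0)`, `z = (u,v,c)`.
The generators are triangular: `N • x = 0`, `P • y ∈ ℤ x` and `Q • z ∈ ℤ x + ℤ y`. The
first needs `a ∣ m`; the second `a ∣ P s`, which holds because `s` is a multiple of `a/A`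
and `A ∣ P`; the third `b ∣ Q v` (as `v` is a multiple of `b/B` and `B ∣ Q`) together with
the congruence defining `u₀` (the shift `a z / C` is a multiple of `a/C`, and `C ∣ Q`).
Reducing the coefficients of `z`, then `y`, then `x` modulo `Q`, `P`, `N` puts every element
of the closure in the form `i x + j y + k z` with `i < N`, `j < P`, `k < Q`, and these
`NPQ = mnr/(abc)` combinations are distinct, as one reads off the coordinates from the last
one to the first.
-/

open Finset

theorem zsmul_eq_emod_add {G : Type*} [AddCommGroup G] (i : ℤ) (N : ℕ) (x : G) :
    i • x = (i % N) • x + (i / N) • (N • x) := by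
  rw [← natCast_zsmul, smul_smul, ← add_smul, Int.emod_add_ediv_mul]

theorem Int.exists_natCast_eq_emod (i : ℤ) {N : ℕ} (hN : 0 < N) :
    ∃ n < N, (n : ℤ) = i % N := by
  have := Int.emod_lt_of_pos i (Int.natCast_pos.mpr hN)
  exact ⟨(i % N).toNat, by omega, Int.toNat_of_nonneg (Int.emod_nonneg _ (by omega))⟩

theorem Nat.dvd_mul_div_gcd (a q : ℕ) : a ∣ q * (a / a.gcd q) :=
  (Nat.dvd_mul_of_div_dvd (Nat.gcd_dvd_left a q) dvd_rfl).trans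
    (mul_dvd_mul_right (Nat.gcd_dvd_right a q) _)

theorem Nat.dvd_mul_mul_div_gcd (a q k : ℕ) : a ∣ q * (a * k / a.gcd q) := by
  rw [← Nat.div_mul_right_comm (Nat.gcd_dvd_left a q), ← mul_assoc]
  exact (Nat.dvd_mul_div_gcd a q).mul_right k

theorem Nat.dvd_mul_mul_mul_div_gcd_mul (b q : ℕ) {e k : ℕ} (he : e ∣ k) (l : ℕ) :
    b ∣ q * (b * k * l / (b.gcd q * e)) := by
  rw [← Nat.div_mul_right_comm (mul_dvd_mul (Nat.gcd_dvd_left b q) he),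
    ← Nat.div_mul_div_comm (Nat.gcd_dvd_left b q) he, mul_assoc, ← mul_assoc q]
  exact (Nat.dvd_mul_div_gcd b q).mul_right _

def indexBox (N P Q : ℕ) : Finset (ℕ × ℕ × ℕ) := range N ×ˢ range P ×ˢ range Q

section Triangular

variable {G : Type*} [AddCommGroup G] {x y z : G}

def tripleComb (x y z : G) (q : ℕ × ℕ × ℕ) : G := q.1 • x + q.2.1 • y + q.2.2 • z

variable {N P Q : ℕ} {α β γ : ℤ}

theorem exists_mem_indexBox_of_triangular (hN : 0 < N) (hP : 0 < P) (hQ : 0 < Q)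
    (hx : N • x = 0) (hy : P • y = α • x) (hz : Q • z = β • x + γ • y) (i j k : ℤ) :
    ∃ q ∈ indexBox N P Q, tripleComb x y z q = i • x + j • y + k • z := by
  obtain ⟨k', hk', hk⟩ := Int.exists_natCast_eq_emod k hQ
  obtain ⟨j', hj', hj⟩ := Int.exists_natCast_eq_emod (j + k / Q * γ) hP
  obtain ⟨i', hi', hi⟩ :=
    Int.exists_natCast_eq_emod (i + k / Q * β + (j + k / Q * γ) / P * α) hN
  refine ⟨(i', j', k'), by simp [indexBox, hi', hj', hk'], ?_⟩
  have ek := zsmul_eq_emod_add k Q z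
  have ej := zsmul_eq_emod_add (j + k / Q * γ) P y
  have ei := zsmul_eq_emod_add (i + k / Q * β + (j + k / Q * γ) / P * α) N x
  rw [← hk, hz] at ek
  rw [← hj, hy] at ej
  rw [← hi, hx] at ei
  simp only [tripleComb, ← natCast_zsmul]
  linear_combination (norm := module) -ei - ej - ek

namespace AddSubgroup

theorem mem_closure_triple {p : G} :
    p ∈ closure ({x, y, z} : Set G) ↔ ∃ i j k : ℤ, i • x + j • y + k • z = p := by
  rw [← Set.singleton_union, closure_union, mem_sup]
  simp_rw [mem_closure_singleton, mem_closure_pair]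
  constructor
  · rintro ⟨_, ⟨i, rfl⟩, _, ⟨j, k, rfl⟩, rfl⟩
    exact ⟨i, j, k, by abel⟩
  · rintro ⟨i, j, k, rfl⟩
    exact ⟨_, ⟨i, rfl⟩, _, ⟨j, k, rfl⟩, by abel⟩

theorem coe_closure_triple_of_triangular (hN : 0 < N) (hP : 0 < P) (hQ : 0 < Q)
    (hx : N • x = 0) (hy : P • y = α • x) (hz : Q • z = β • x + γ • y) :
    (closure ({x, y, z} : Set G) : Set G) = tripleComb x y z '' indexBox N P Q := by
  ext p
  rw [SetLike.mem_coe, mem_closure_triple]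
  constructor
  · rintro ⟨i, j, k, rfl⟩
    exact exists_mem_indexBox_of_triangular hN hP hQ hx hy hz i j k
  · rintro ⟨q, -, rfl⟩
    exact ⟨q.1, q.2.1, q.2.2, by simp only [tripleComb, natCast_zsmul]⟩

theorem card_closure_triple_of_triangular (hN : 0 < N) (hP : 0 < P) (hQ : 0 < Q)
    (hx : N • x = 0) (hy : P • y = α • x) (hz : Q • z = β • x + γ • y)
    (hinj : Set.InjOn (tripleComb x y z) (indexBox N P Q)) :
    Nat.card (closure ({x, y, z} : Set G)) = N * P * Q := by
  rw [← SetLike.coe_sort_coe, coe_closure_triple_of_triangular hN hP hQ hx hy hz,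
    Nat.card_image_of_injOn hinj]
  simp [indexBox, mul_assoc]

end AddSubgroup

end Triangular

theorem ZMod.eq_of_natCast_mul_eq {r c k k' : ℕ} (hc : c ∣ r) (hk : k < r / c)
    (hk' : k' < r / c) (h : ((k * c : ℕ) : ZMod r) = ((k' * c : ℕ) : ZMod r)) : k = k' := by
  have hc0 : 0 < c := Nat.pos_of_ne_zero (by rintro rfl; simp at hk)
  rw [Nat.lt_div_iff_mul_lt' hc, mul_comm] at hk hk'
  rw [ZMod.natCast_eq_natCast_iff', Nat.mod_eq_of_lt hk, Nat.mod_eq_of_lt hk'] at h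
  exact Nat.eq_of_mul_eq_mul_right hc0 h

section TriangularGenerators

variable {m n r a b c s u v : ℕ}

local notation "x₀" => ((a : ZMod m), (0 : ZMod n), (0 : ZMod r))
local notation "y₀" => ((s : ZMod m), (b : ZMod n), (0 : ZMod r))
local notation "z₀" => ((u : ZMod m), (v : ZMod n), (c : ZMod r))

theorem tripleComb_triangular (i j k : ℕ) :
    tripleComb x₀ y₀ z₀ (i, j, k) =
      (((i * a + j * s + k * u : ℕ) : ZMod m), ((j * b + k * v : ℕ) : ZMod n),
        ((k * c : ℕ) : ZMod r)) := by
  ext <;> simp [tripleComb, nsmul_eq_mul]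

theorem nsmul_first_generator_eq_zero {N : ℕ} (hN : N * a = m) : N • x₀ = 0 := by
  ext <;> simp [nsmul_eq_mul, ← Nat.cast_mul, hN]

theorem nsmul_second_generator_eq {P α : ℕ} (hP : P * b = n) (hs : P * s = α * a) :
    P • y₀ = (α : ℤ) • x₀ := by
  ext <;> simp [nsmul_eq_mul, ← Nat.cast_mul, hs, hP]

theorem exists_nsmul_third_generator_eq {Q j : ℕ} (hQ : Q * c = r) (hv : Q * v = j * b)
    (hu : Q * u ≡ j * s [MOD a]) : ∃ β : ℤ, Q • z₀ = β • x₀ + (j : ℤ) • y₀ := by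
  obtain ⟨e, he⟩ := hu.dvd
  refine ⟨-e, ?_⟩
  ext
  · have he' := congrArg (Int.cast : ℤ → ZMod m) he
    push_cast at he'
    simp only [Prod.fst_add, Prod.smul_fst]
    simp only [nsmul_eq_mul, zsmul_eq_mul]
    push_cast
    linear_combination -he'
  · simp [nsmul_eq_mul, ← Nat.cast_mul, hv]
  · simp [nsmul_eq_mul, ← Nat.cast_mul, hQ]

theorem injOn_tripleComb_triangular (ha : a ∣ m) (hb : b ∣ n) (hc : c ∣ r) :
    Set.InjOn (tripleComb x₀ y₀ z₀) (indexBox (m / a) (n / b) (r / c)) := by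
  rintro ⟨i, j, k⟩ hijk ⟨i', j', k'⟩ hijk' h
  simp only [indexBox, coe_product, coe_range, Set.mem_prod, Set.mem_Iio] at hijk hijk'
  simp only [tripleComb_triangular, Prod.mk.injEq] at h
  obtain ⟨hx, hy, hz⟩ := h
  obtain rfl := ZMod.eq_of_natCast_mul_eq hc hijk.2.2 hijk'.2.2 hz
  obtain rfl : j = j' := ZMod.eq_of_natCast_mul_eq hb hijk.2.1 hijk'.2.1 <| by
    push_cast at hy ⊢; exact add_right_cancel hy
  obtain rfl : i = i' := ZMod.eq_of_natCast_mul_eq ha hijk.1 hijk'.1 <| by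
    push_cast at hx ⊢; exact add_right_cancel (add_right_cancel hx)
  rfl

end TriangularGenerators

theorem mul_add_mul_div_gcd_modEq {a b c r s v Q j u₀ : ℕ} (hb : 0 < b) (hc : 0 < c)
    (hQ : Q * c = r) (hv : Q * v = j * b) (hu₀ : Q * u₀ ≡ r * v * s / (b * c) [MOD a])
    (z : ℕ) : Q * (u₀ + a * z / a.gcd Q) ≡ j * s [MOD a] := by
  have hrhs : r * v * s / (b * c) = j * s := by
    rw [← Nat.mul_div_cancel_left (j * s) (Nat.mul_pos hb hc)]
    congr 1
    calc r * v * s = c * (Q * v) * s := by rw [← hQ]; ring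
      _ = b * c * (j * s) := by rw [hv]; ring
  rw [mul_add, ← hrhs, ← add_zero (r * v * s / (b * c))]
  exact hu₀.add (Nat.modEq_zero_iff_dvd.mpr (Nat.dvd_mul_mul_div_gcd a Q z))

theorem subgroup_Uabctzw_general (m n r : ℕ) (hm : 0 < m) (hn : 0 < n) (hr : 0 < r)
    (a b c : ℕ) (ha : a ∣ m) (hb : b ∣ n) (hc : c ∣ r)
    (A B C X : ℕ) (hA : A = Nat.gcd a (n / b)) (hB : B = Nat.gcd b (r / c))
    (hC : C = Nat.gcd a (r / c))
    (t : ℕ) (s : ℕ) (hs : s = a * t / A)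
    (w : ℕ) (v : ℕ) (hv : v = b * X * w / (B * Nat.gcd t X))
    (u₀ : ℕ) (hu₀ : (r / c) * u₀ ≡ r * v * s / (b * c) [MOD a])
    (z : ℕ) (u : ℕ) (hu : u = u₀ + a * z / C) :
    ((AddSubgroup.closure
        {((a : ZMod m), (0 : ZMod n), (0 : ZMod r)),
         ((s : ZMod m), (b : ZMod n), (0 : ZMod r)),
         ((u : ZMod m), (v : ZMod n), (c : ZMod r))} :
        AddSubgroup (ZMod m × ZMod n × ZMod r)) : Set (ZMod m × ZMod n × ZMod r)) =
      {p : ZMod m × ZMod n × ZMod r | ∃ i j k : ℕ,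
        i ≤ m / a - 1 ∧ j ≤ n / b - 1 ∧ k ≤ r / c - 1 ∧
        p = (((i * a + j * s + k * u : ℕ) : ZMod m), ((j * b + k * v : ℕ) : ZMod n),
             ((k * c : ℕ) : ZMod r))} ∧
    Nat.card (AddSubgroup.closure
        {((a : ZMod m), (0 : ZMod n), (0 : ZMod r)),
         ((s : ZMod m), (b : ZMod n), (0 : ZMod r)),
         ((u : ZMod m), (v : ZMod n), (c : ZMod r))} :
        AddSubgroup (ZMod m × ZMod n × ZMod r)) = m * n * r / (a * b * c) := by
  have hpos : ∀ {d e : ℕ}, 0 < e → d ∣ e → 0 < e / d := fun he hd =>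
    Nat.div_pos (Nat.le_of_dvd he hd) (Nat.pos_of_dvd_of_pos hd he)
  have hN := hpos hm ha
  have hP := hpos hn hb
  have hQ := hpos hr hc
  have hPs : a ∣ n / b * s := by rw [hs, hA]; exact Nat.dvd_mul_mul_div_gcd a _ t
  have hQv : r / c * v = r / c * v / b * b := by
    refine (Nat.div_mul_cancel ?_).symm
    rw [hv, hB]; exact Nat.dvd_mul_mul_mul_div_gcd_mul b _ (Nat.gcd_dvd_right t X) w
  have hQu : r / c * u ≡ r / c * v / b * s [MOD a] := by
    rw [hu, hC]
    exact mul_add_mul_div_gcd_modEq (Nat.pos_of_dvd_of_pos hb hn)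
      (Nat.pos_of_dvd_of_pos hc hr) (Nat.div_mul_cancel hc) hQv hu₀ z
  have hx := nsmul_first_generator_eq_zero (n := n) (r := r) (Nat.div_mul_cancel ha)
  have hy := nsmul_second_generator_eq (m := m) (r := r) (Nat.div_mul_cancel hb)
    (Nat.div_mul_cancel hPs).symm
  obtain ⟨β, hz⟩ := exists_nsmul_third_generator_eq (m := m) (Nat.div_mul_cancel hc) hQv hQu
  refine ⟨?_, ?_⟩
  · rw [AddSubgroup.coe_closure_triple_of_triangular hN hP hQ hx hy hz]
    ext p
    simp only [Set.mem_image, indexBox, coe_product, coe_range, Set.mem_prod, Set.mem_Iio,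
      Prod.exists, tripleComb_triangular, Set.mem_ofPred_eq, Nat.le_sub_one_iff_lt hN,
      Nat.le_sub_one_iff_lt hP, Nat.le_sub_one_iff_lt hQ, and_assoc, eq_comm (a := p)]
  · rw [AddSubgroup.card_closure_triple_of_triangular hN hP hQ hx hy hz
      (injOn_tripleComb_triangular ha hb hc), Nat.div_mul_div_comm ha hb,
      Nat.div_mul_div_comm (mul_dvd_mul ha hb) hc]

/-- With `a ∣ m`, `b ∣ n`, `c ∣ r`, `A = gcd(a, n/b)`, `B = gcd(b, r/c)`, `C = gcd(a, r/c)`,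
`X = ABC / gcd(a·(r/c), ABC)`, `s = a·t/A` (`0 ≤ t ≤ A-1`),
`v = b·X·w/(B·gcd(t,X))` (`0 ≤ w ≤ B·gcd(t,X)/X - 1`), `u₀` a solution of
`(r/c)·u ≡ r·v·s/(b·c) (mod a)` and `u = u₀ + a·z/C` (`0 ≤ z ≤ C-1`), the subgroup
`U_{a,b,c,t,w,z}` of `ℤ_m × ℤ_n × ℤ_r` generated by `(a,0,0)`, `(s,b,0)`, `(u,v,c)` is the
set `{(i·a + j·s + k·u, j·b + k·v, k·c)}` and has order `mnr/(abc)`. -/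
theorem subgroup_Uabctzw (m n r : ℕ) (hm : 0 < m) (hn : 0 < n) (hr : 0 < r)
    (a b c : ℕ) (ha : a ∣ m) (hb : b ∣ n) (hc : c ∣ r)
    (A B C X : ℕ) (hA : A = Nat.gcd a (n / b)) (hB : B = Nat.gcd b (r / c))
    (hC : C = Nat.gcd a (r / c))
    (hX : X = A * B * C / Nat.gcd (a * (r / c)) (A * B * C))
    (t : ℕ) (ht : t ≤ A - 1) (s : ℕ) (hs : s = a * t / A)
    (w : ℕ) (hw : w ≤ B * Nat.gcd t X / X - 1)
    (v : ℕ) (hv : v = b * X * w / (B * Nat.gcd t X))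
    (u₀ : ℕ) (hu₀ : (r / c) * u₀ ≡ r * v * s / (b * c) [MOD a])
    (z : ℕ) (hz : z ≤ C - 1) (u : ℕ) (hu : u = u₀ + a * z / C) :
    ((AddSubgroup.closure
        {((a : ZMod m), (0 : ZMod n), (0 : ZMod r)),
         ((s : ZMod m), (b : ZMod n), (0 : ZMod r)),
         ((u : ZMod m), (v : ZMod n), (c : ZMod r))} :
        AddSubgroup (ZMod m × ZMod n × ZMod r)) : Set (ZMod m × ZMod n × ZMod r)) =
      {p : ZMod m × ZMod n × ZMod r | ∃ i j k : ℕ,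
        i ≤ m / a - 1 ∧ j ≤ n / b - 1 ∧ k ≤ r / c - 1 ∧
        p = (((i * a + j * s + k * u : ℕ) : ZMod m), ((j * b + k * v : ℕ) : ZMod n),
             ((k * c : ℕ) : ZMod r))} ∧
    Nat.card (AddSubgroup.closure
        {((a : ZMod m), (0 : ZMod n), (0 : ZMod r)),
         ((s : ZMod m), (b : ZMod n), (0 : ZMod r)),
         ((u : ZMod m), (v : ZMod n), (c : ZMod r))} :
        AddSubgroup (ZMod m × ZMod n × ZMod r)) = m * n * r / (a * b * c) :=
  subgroup_Uabctzw_general m n r hm hn hr a b c ha hb hc A B C X hA hB hC t s hs w v hv u₀ hu₀ z u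
    hu
end

section
/- For all m, n, r ∈ ℕ+ and every positive divisor δ of mnr, the number of subgroups of order δ of the group ℤ_m × ℤ_n × ℤ_r equals Σ (A·B·C/X²)·P(X), the sum running over all triples (a,b,c) with a ∣ m, b ∣ n, c ∣ r and a·b·c = mnr/δ, where A = gcd(a, n/b), B = gcd(b, r/c), C = gcd(a, r/c), and X = ABC / gcd(a·(r/c), ABC). -/
/-!
Via the reduction map `ℤ³ → ℤ_m × ℤ_n × ℤ_r`, subgroups of `ℤ_m × ℤ_n × ℤ_r` correspond to the
subgroups `L ≤ ℤ³` containing its kernel `mℤ × nℤ × rℤ`, with the same index. Such an `L` has a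
unique basis `(a,0,0), (s,b,0), (u,v,c)` in Hermite normal form (`s, u < a`, `v < b`), so its index
is `abc`, and it contains the kernel iff `a ∣ m`, `b ∣ n`, `c ∣ r` and `(s, u, v)` satisfies two
divisibility conditions and a linear congruence. For fixed `a, b, c` the congruence in `u` has
`C = gcd(a, r/c)` solutions or none; the divisibility conditions make `s`, `v` multiples of `a/A`,
`b/B`, and for the quotients `σ < A`, `τ < B` solvability becomes `X ∣ στ`. There are
`(A/X)(B/X)P(X)` such pairs, because `#{τ < X | X ∣ στ} = gcd(X, σ)`.
-/

/-- The gcd-sum (Pillai) function `P(n) = Σ_{k=1}^{n} gcd(k,n)`. -/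
def P (n : ℕ) : ℕ := ∑ k ∈ Finset.Icc 1 n, Nat.gcd k n

open Finset Function

theorem Nat.dvd_mul_iff_div_gcd_dvd {k t x : ℕ} (hk : 0 < k) : k ∣ t * x ↔ k / k.gcd t ∣ x := by
  obtain ⟨k', t', hco, hk', ht'⟩ := Nat.exists_coprime k t
  set g := k.gcd t
  have hg : 0 < g := Nat.gcd_pos_of_pos_left t hk
  rw [hk', ht', Nat.mul_div_cancel _ hg, mul_right_comm, Nat.mul_dvd_mul_iff_right hg]
  exact hco.dvd_mul_left

theorem Nat.div_gcd_dvd_of_dvd_mul {C x t A : ℕ} (hC : 0 < C) (hxt : x ∣ t) (h : C ∣ x * A) :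
    C / C.gcd t ∣ A :=
  (Nat.div_dvd_div_left (Nat.gcd_dvd_left C t) (Nat.gcd_dvd_gcd_of_dvd_right C hxt)).trans
    ((Nat.dvd_mul_iff_div_gcd_dvd hC).mp h)

theorem Nat.mul_mul_div_gcd_mul_eq {a r A B C : ℕ} (hA : A ∣ a) (hB : B ∣ r) (hA0 : 0 < A)
    (hB0 : 0 < B) :
    A * B * C / (a * r).gcd (A * B * C) = C / C.gcd (a / A * (r / B)) := by
  obtain ⟨a₁, rfl⟩ := hA
  obtain ⟨r₁, rfl⟩ := hB
  rw [Nat.mul_div_cancel_left _ hA0, Nat.mul_div_cancel_left _ hB0,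
    show A * a₁ * (B * r₁) = A * B * (a₁ * r₁) by ring, Nat.gcd_mul_left,
    Nat.mul_div_mul_left _ _ (Nat.mul_pos hA0 hB0), Nat.gcd_comm]

theorem Nat.mul_div_mul_div_eq_div_mul {r b B τ : ℕ} (hb : 0 < b) (hBb : B ∣ b) (hBr : B ∣ r) :
    r * (b / B * τ) / b = r / B * τ := by
  obtain ⟨b₁, rfl⟩ := hBb
  obtain ⟨r₁, rfl⟩ := hBr
  have hB : 0 < B := Nat.pos_of_mul_pos_right hb
  rw [Nat.mul_div_cancel_left _ hB, Nat.mul_div_cancel_left _ hB,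
    show B * r₁ * (b₁ * τ) = B * b₁ * (r₁ * τ) by ring, Nat.mul_div_cancel_left _ hb]

theorem Nat.eq_of_lt_of_lt_of_dvd_sub {a x y : ℕ} (hx : x < a) (hy : y < a) (h : (a : ℤ) ∣ x - y) :
    x = y :=
  ((Nat.modEq_iff_dvd.mpr h).eq_of_lt_of_lt hy hx).symm

theorem Int.natCast_natMod {x : ℤ} {a : ℕ} (ha : 0 < a) : (x.natMod a : ℤ) = x - x / a * a := by
  rw [Int.natMod, Int.toNat_of_nonneg (Int.emod_nonneg x (by exact_mod_cast ha.ne')),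
    Int.emod_def, mul_comm]

theorem sum_range_filter_dvd {M : Type*} [AddCommMonoid M] {d N : ℕ} (hd : 0 < d) (hdN : d ∣ N)
    (f : ℕ → M) : ∑ x ∈ range N with d ∣ x, f x = ∑ y ∈ range (N / d), f (d * y) := by
  obtain ⟨q, rfl⟩ := hdN
  rw [Nat.mul_div_cancel_left q hd, ← sum_image fun x _ y _ h ↦ Nat.eq_of_mul_eq_mul_left hd h]
  congr 1
  ext x
  simp only [mem_filter, mem_range, mem_image]
  constructor
  · rintro ⟨hx, y, rfl⟩
    exact ⟨y, (Nat.mul_lt_mul_left hd).mp hx, rfl⟩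
  · rintro ⟨y, hy, rfl⟩
    exact ⟨(Nat.mul_lt_mul_left hd).mpr hy, dvd_mul_right d y⟩

theorem sum_range_filter_dvd_mul {M : Type*} [AddCommMonoid M] {k t : ℕ} (hk : 0 < k)
    (f : ℕ → M) :
    ∑ x ∈ range k with k ∣ t * x, f x = ∑ y ∈ range (k.gcd t), f (k / k.gcd t * y) := by
  have hg : k.gcd t ∣ k := Nat.gcd_dvd_left k t
  simp_rw [Nat.dvd_mul_iff_div_gcd_dvd hk]
  rw [sum_range_filter_dvd (Nat.div_pos (Nat.le_of_dvd hk hg) (Nat.gcd_pos_of_pos_left t hk))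
    (Nat.div_dvd_of_dvd hg), Nat.div_div_self hg hk.ne']

-- Dividing out `d = gcd a g` makes `g` invertible modulo `a / d`, so the solutions form a single
-- residue class modulo `a / d`.
theorem card_filter_range_mul_modEq {a g w : ℕ} (ha : 0 < a) :
    #{u ∈ range a | g * u ≡ w [MOD a]} = if a.gcd g ∣ w then a.gcd g else 0 := by
  obtain ⟨a', g', hco, ha', hg'⟩ := Nat.exists_coprime a g
  generalize a.gcd g = d at *
  subst ha' hg'
  have ha'0 : 0 < a' := Nat.pos_of_mul_pos_right ha
  have hd : 0 < d := Nat.pos_of_mul_pos_left ha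
  split_ifs with hw
  · obtain ⟨w', rfl⟩ := hw
    obtain ⟨u₀, -, hu₀⟩ := Nat.exists_mul_mod_eq_of_coprime w' hco.symm ha'0.ne'
    have key : ∀ u, g' * d * u ≡ d * w' [MOD a' * d] ↔ u ≡ u₀ [MOD a'] := fun u ↦ by
      rw [mul_comm g', mul_assoc, mul_comm a', Nat.ModEq.mul_left_cancel_iff' hd.ne']
      exact ⟨fun h ↦ (h.trans hu₀.symm).cancel_left_of_coprime hco,
        fun h ↦ (h.mul_left g').trans hu₀⟩
    simp_rw [key, ← Nat.count_eq_card_filter_range, Nat.count_modEq_card _ ha'0,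
      Nat.mul_mod_right, Nat.not_lt_zero, if_false, add_zero, Nat.mul_div_cancel_left _ ha'0]
  · refine Finset.card_eq_zero.mpr (filter_eq_empty_iff.mpr fun u _ h ↦ hw ?_)
    refine ((h.of_mul_left a').dvd_iff dvd_rfl).mp ?_
    rw [mul_comm g', mul_assoc]
    exact dvd_mul_right d _

theorem sum_range_gcd_eq_P (e : ℕ) : ∑ σ ∈ range e, e.gcd σ = P e := by
  have hshift : ∑ σ ∈ range e, e.gcd σ = ∑ σ ∈ range e, e.gcd (σ + 1) := by
    have := (sum_range_succ (e.gcd ·) e).symm.trans (sum_range_succ' (e.gcd ·) e)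
    rwa [Nat.gcd_self, Nat.gcd_zero_right, add_left_inj] at this
  rw [hshift, P, ← Ico_add_one_right_eq_Icc, sum_Ico_eq_sum_range, add_tsub_cancel_right]
  exact sum_congr rfl fun σ _ ↦ by rw [Nat.gcd_comm, add_comm]

theorem sum_range_gcd {e N : ℕ} (he : 0 < e) (heN : e ∣ N) :
    ∑ σ ∈ range N, e.gcd σ = N / e * P e := by
  obtain ⟨q, rfl⟩ := heN
  rw [Nat.mul_div_cancel_left q he]
  induction q with
  | zero => simp
  | succ q ih =>
    have hper : ∀ σ ∈ range e, e.gcd (e * q + σ) = e.gcd σ := fun σ _ ↦ by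
      rw [add_comm, Nat.gcd_add_mul_left_right]
    rw [Nat.mul_succ, sum_range_add, ih, sum_congr rfl hper, sum_range_gcd_eq_P]
    ring

theorem card_filter_range_dvd_mul {e B : ℕ} (σ : ℕ) (he : 0 < e) (heB : e ∣ B) :
    #{τ ∈ range B | e ∣ σ * τ} = B / e * e.gcd σ := by
  have hg : e.gcd σ ∣ e := Nat.gcd_dvd_left e σ
  have hg0 : 0 < e.gcd σ := Nat.gcd_pos_of_pos_left σ he
  simp_rw [card_eq_sum_ones, Nat.dvd_mul_iff_div_gcd_dvd he]
  rw [sum_range_filter_dvd (Nat.div_pos (Nat.le_of_dvd he hg) hg0)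
    ((Nat.div_dvd_of_dvd hg).trans heB), sum_const, card_range, smul_eq_mul, mul_one]
  obtain ⟨e', he'⟩ := hg
  obtain ⟨q, rfl⟩ := heB
  generalize e.gcd σ = g at *
  subst he'
  rw [Nat.mul_div_cancel_left q he, Nat.mul_div_cancel_left e' hg0, mul_right_comm,
    Nat.mul_div_cancel _ (Nat.pos_of_mul_pos_left he), mul_comm]

theorem card_filter_range_product_dvd_mul {e A B : ℕ} (he : 0 < e) (heA : e ∣ A) (heB : e ∣ B) :
    #{p ∈ range A ×ˢ range B | e ∣ p.1 * p.2} = A / e * (B / e) * P e := by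
  rw [card_filter, sum_product]
  simp_rw [← card_filter, card_filter_range_dvd_mul _ he heB, ← mul_sum, sum_range_gcd he heA]
  ring

-- With `n' = n / b` and `r' = r / c`, these are the `(s, u, v)` for which `hnfLattice a b c s u v`
-- contains `mℤ × nℤ × rℤ` (see `hnfLattice_zero_le_iff`).
def hnfOffsets (a b n' r' : ℕ) : Finset (ℕ × ℕ × ℕ) :=
  {x ∈ range a ×ˢ range a ×ˢ range b |
    a ∣ n' * x.1 ∧ b ∣ r' * x.2.2 ∧ r' * x.2.1 ≡ r' * x.2.2 / b * x.1 [MOD a]}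

theorem card_hnfOffsets_eq_sum {a b n' r' : ℕ} (ha : 0 < a) :
    #(hnfOffsets a b n' r') = ∑ s ∈ range a with a ∣ n' * s, ∑ v ∈ range b with b ∣ r' * v,
      if a.gcd r' ∣ r' * v / b * s then a.gcd r' else 0 := by
  rw [hnfOffsets, card_filter, sum_product, sum_filter]
  refine sum_congr rfl fun s _ ↦ ?_
  rw [sum_product, sum_comm]
  split_ifs with hs
  · rw [sum_filter]
    refine sum_congr rfl fun v _ ↦ ?_
    by_cases hv : b ∣ r' * v
    · rw [if_pos hv, ← card_filter_range_mul_modEq ha, card_filter]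
      simp only [hs, hv, true_and]
    · simp [hv]
  · simp [hs]

theorem card_hnfOffsets_eq_mul_card {a b n' r' : ℕ} (ha : 0 < a) (hb : 0 < b) :
    #(hnfOffsets a b n' r') = a.gcd r' * #{p ∈ range (a.gcd n') ×ˢ range (b.gcd r') |
      a.gcd r' / (a.gcd r').gcd (a / a.gcd n' * (r' / b.gcd r')) ∣ p.1 * p.2} := by
  have hC0 : 0 < a.gcd r' := Nat.gcd_pos_of_pos_left r' ha
  rw [card_hnfOffsets_eq_sum ha, sum_range_filter_dvd_mul ha, card_filter, sum_product, mul_sum]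
  refine sum_congr rfl fun σ _ ↦ ?_
  rw [sum_range_filter_dvd_mul hb, mul_sum]
  refine sum_congr rfl fun τ _ ↦ ?_
  rw [Nat.mul_div_mul_div_eq_div_mul hb (Nat.gcd_dvd_left b r') (Nat.gcd_dvd_right b r'),
    show r' / b.gcd r' * τ * (a / a.gcd n' * σ) = a / a.gcd n' * (r' / b.gcd r') * (σ * τ) by ring,
    if_congr (Nat.dvd_mul_iff_div_gcd_dvd hC0) rfl rfl, mul_ite, mul_one, mul_zero]

theorem card_hnfOffsets {a b n' r' : ℕ} (ha : 0 < a) (hb : 0 < b) :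
    #(hnfOffsets a b n' r') =
      (Nat.gcd a n' * Nat.gcd b r' * Nat.gcd a r' /
          (Nat.gcd a n' * Nat.gcd b r' * Nat.gcd a r' /
            Nat.gcd (a * r') (Nat.gcd a n' * Nat.gcd b r' * Nat.gcd a r')) ^ 2) *
        P (Nat.gcd a n' * Nat.gcd b r' * Nat.gcd a r' /
            Nat.gcd (a * r') (Nat.gcd a n' * Nat.gcd b r' * Nat.gcd a r')) := by
  set A := a.gcd n'
  set B := b.gcd r'
  set C := a.gcd r'
  have hA0 : 0 < A := Nat.gcd_pos_of_pos_left n' ha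
  have hB0 : 0 < B := Nat.gcd_pos_of_pos_left r' hb
  have hC0 : 0 < C := Nat.gcd_pos_of_pos_left r' ha
  set X := C / C.gcd (a / A * (r' / B)) with hX
  have hX0 : 0 < X :=
    Nat.div_pos (Nat.le_of_dvd hC0 (Nat.gcd_dvd_left _ _)) (Nat.gcd_pos_of_pos_left _ hC0)
  have hXA : X ∣ A := Nat.div_gcd_dvd_of_dvd_mul hC0 (dvd_mul_right _ _)
    ((Nat.div_mul_cancel (Nat.gcd_dvd_left a n')).symm ▸ Nat.gcd_dvd_left a r')
  have hXB : X ∣ B := Nat.div_gcd_dvd_of_dvd_mul hC0 (dvd_mul_left _ _)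
    ((Nat.div_mul_cancel (Nat.gcd_dvd_right b r')).symm ▸ Nat.gcd_dvd_right a r')
  rw [Nat.mul_mul_div_gcd_mul_eq (Nat.gcd_dvd_left a n') (Nat.gcd_dvd_right b r') hA0 hB0, ← hX,
    card_hnfOffsets_eq_mul_card ha hb, card_filter_range_product_dvd_mul hX0 hXA hXB]
  obtain ⟨A₁, hA₁⟩ := hXA
  obtain ⟨B₁, hB₁⟩ := hXB
  rw [hA₁, hB₁, Nat.mul_div_cancel_left _ hX0, Nat.mul_div_cancel_left _ hX0,
    show X * A₁ * (X * B₁) * C = X ^ 2 * (A₁ * B₁ * C) by ring,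
    Nat.mul_div_cancel_left _ (pow_pos hX0 2)]
  ring

theorem LinearMap.index_range_eq_natAbs_det {M : Type*} [AddCommGroup M] [Module.Free ℤ M]
    [Module.Finite ℤ M] {f : M →ₗ[ℤ] M} (hf : Injective f) :
    (LinearMap.range f).toAddSubgroup.index = (LinearMap.det f).natAbs :=
  (Submodule.natAbs_det_equiv (LinearMap.range f) (LinearEquiv.ofInjective f hf)).symm

theorem Int.exists_pos_mem_addSubgroup_iff_dvd (H : AddSubgroup ℤ) {w : ℤ} (hw : w ≠ 0)
    (hwH : w ∈ H) : ∃ d : ℕ, 0 < d ∧ ∀ x, x ∈ H ↔ (d : ℤ) ∣ x := by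
  obtain ⟨g, rfl⟩ := Int.subgroup_cyclic H
  have hmem : ∀ x, x ∈ AddSubgroup.closure {g} ↔ (g.natAbs : ℤ) ∣ x := fun x ↦ by
    rw [← AddSubgroup.zmultiples_eq_closure, ← Int.zmultiples_natAbs, Int.mem_zmultiples_iff]
  refine ⟨g.natAbs, Nat.pos_of_ne_zero fun h ↦ hw ?_, hmem⟩
  simpa [h] using (hmem w).mp hwH

section Elimination

variable {L : AddSubgroup (ℤ × ℤ × ℤ)}

theorem mem_iff_elim_trd {u v c x y z : ℤ} (hg : (u, v, c) ∈ L) (hz : c ∣ z) :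
    (x, y, z) ∈ L ↔ (x - z / c * u, y - z / c * v, 0) ∈ L := by
  rw [← add_mem_cancel_right (zsmul_mem hg (-(z / c)))]
  convert Iff.rfl using 2
  ext <;> simp [Int.ediv_mul_cancel hz, sub_eq_add_neg]

theorem mem_iff_elim_snd {s b x y : ℤ} (hg : (s, b, 0) ∈ L) (hy : b ∣ y) :
    (x, y, 0) ∈ L ↔ (x - y / b * s, 0, 0) ∈ L := by
  rw [← add_mem_cancel_right (zsmul_mem hg (-(y / b)))]
  convert Iff.rfl using 2
  ext <;> simp [Int.ediv_mul_cancel hy, sub_eq_add_neg]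

theorem exists_fst_lt_mem {a : ℕ} (ha : 0 < a) (h₁ : ((a : ℤ), 0, 0) ∈ L) {x y z : ℤ}
    (h : (x, y, z) ∈ L) : ∃ s : ℕ, s < a ∧ ((s : ℤ), y, z) ∈ L := by
  refine ⟨x.natMod a, Int.natMod_lt ha.ne', ?_⟩
  convert sub_mem h (zsmul_mem h₁ (x / a)) using 1
  ext <;> simp [Int.natCast_natMod ha]

theorem exists_snd_lt_mem {b : ℕ} (hb : 0 < b) {s : ℤ} (h₂ : (s, (b : ℤ), 0) ∈ L) {x y z : ℤ}
    (h : (x, y, z) ∈ L) : ∃ x' : ℤ, ∃ v : ℕ, v < b ∧ (x', (v : ℤ), z) ∈ L := by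
  refine ⟨x - y / b * s, y.natMod b, Int.natMod_lt hb.ne', ?_⟩
  convert sub_mem h (zsmul_mem h₂ (y / b)) using 1
  ext <;> simp [Int.natCast_natMod hb]

end Elimination

def hnfMap (a b c s u v : ℤ) : ℤ × ℤ × ℤ →ₗ[ℤ] ℤ × ℤ × ℤ where
  toFun p := (a * p.1 + s * p.2.1 + u * p.2.2, b * p.2.1 + v * p.2.2, c * p.2.2)
  map_add' p q := by ext <;> simp <;> ring
  map_smul' k p := by ext <;> simp <;> ring

@[simps]
def finThreeArrow : (Fin 3 → ℤ) ≃ₗ[ℤ] ℤ × ℤ × ℤ where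
  toFun x := (x 0, x 1, x 2)
  invFun p := ![p.1, p.2.1, p.2.2]
  map_add' _ _ := rfl
  map_smul' _ _ := rfl
  left_inv x := by ext i; fin_cases i <;> rfl
  right_inv _ := rfl

theorem det_hnfMap (a b c s u v : ℤ) : LinearMap.det (hnfMap a b c s u v) = a * b * c := by
  have : hnfMap a b c s u v = finThreeArrow.toLinearMap ∘ₗ
      Matrix.toLin' !![a, s, u; 0, b, v; 0, 0, c] ∘ₗ finThreeArrow.symm.toLinearMap := by
    refine LinearMap.ext fun p ↦ ?_
    simp [hnfMap, dotProduct, Fin.sum_univ_three]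
  rw [this, LinearMap.det_conj, LinearMap.det_toLin', Matrix.det_fin_three]
  simp

theorem hnfMap_injective {a b c s u v : ℤ} (ha : a ≠ 0) (hb : b ≠ 0) (hc : c ≠ 0) :
    Injective (hnfMap a b c s u v) := by
  rw [← LinearMap.ker_eq_bot, LinearMap.ker_eq_bot']
  rintro ⟨i, j, k⟩ h
  simp only [hnfMap, LinearMap.coe_mk, AddHom.coe_mk, Prod.mk_eq_zero] at h
  obtain ⟨h1, h2, h3⟩ := h
  obtain rfl : k = 0 := (mul_eq_zero.mp h3).resolve_left hc
  obtain rfl : j = 0 := by simpa [hb] using h2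
  obtain rfl : i = 0 := by simpa [ha] using h1
  rfl

def hnfLattice (a b c s u v : ℕ) : AddSubgroup (ℤ × ℤ × ℤ) :=
  (LinearMap.range (hnfMap a b c s u v)).toAddSubgroup

section hnfLattice

variable {a b c s u v : ℕ}

theorem mem_hnfLattice {p : ℤ × ℤ × ℤ} :
    p ∈ hnfLattice a b c s u v ↔ ∃ q, hnfMap a b c s u v q = p :=
  LinearMap.mem_range

theorem index_hnfLattice (ha : 0 < a) (hb : 0 < b) (hc : 0 < c) :
    (hnfLattice a b c s u v).index = a * b * c := by
  rw [hnfLattice, LinearMap.index_range_eq_natAbs_det (hnfMap_injective (by positivity)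
    (by positivity) (by positivity)), det_hnfMap]
  norm_cast

theorem hnfLattice_le_iff {L : AddSubgroup (ℤ × ℤ × ℤ)} :
    hnfLattice a b c s u v ≤ L ↔ ((a : ℤ), 0, 0) ∈ L ∧ ((s : ℤ), (b : ℤ), 0) ∈ L ∧
      ((u : ℤ), (v : ℤ), (c : ℤ)) ∈ L := by
  constructor
  · intro h
    exact ⟨h ⟨(1, 0, 0), by simp [hnfMap]⟩, h ⟨(0, 1, 0), by simp [hnfMap]⟩,
      h ⟨(0, 0, 1), by simp [hnfMap]⟩⟩
  · rintro ⟨h₁, h₂, h₃⟩ _ ⟨⟨i, j, k⟩, rfl⟩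
    have : hnfMap a b c s u v (i, j, k) =
        i • ((a : ℤ), 0, 0) + j • ((s : ℤ), (b : ℤ), 0) + k • ((u : ℤ), (v : ℤ), (c : ℤ)) := by
      ext <;> simp [hnfMap] <;> ring
    rw [this]
    exact add_mem (add_mem (zsmul_mem h₁ i) (zsmul_mem h₂ j)) (zsmul_mem h₃ k)

theorem hnfLattice_generators_mem :
    ((a : ℤ), 0, 0) ∈ hnfLattice a b c s u v ∧ ((s : ℤ), (b : ℤ), 0) ∈ hnfLattice a b c s u v ∧
      ((u : ℤ), (v : ℤ), (c : ℤ)) ∈ hnfLattice a b c s u v :=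
  hnfLattice_le_iff.mp le_rfl

theorem dvd_of_mem_hnfLattice {x y z : ℤ} (h : (x, y, z) ∈ hnfLattice a b c s u v) :
    (c : ℤ) ∣ z := by
  obtain ⟨q, hq⟩ := h
  exact ⟨q.2.2, (congrArg (·.2.2) hq).symm⟩

theorem mem_hnfLattice_iff_of_trd {x y z : ℤ} :
    (x, y, z) ∈ hnfLattice a b c s u v ↔
      (c : ℤ) ∣ z ∧ (x - z / c * u, y - z / c * v, 0) ∈ hnfLattice a b c s u v := by
  refine ⟨fun h ↦ ?_, fun ⟨hz, h⟩ ↦ (mem_iff_elim_trd hnfLattice_generators_mem.2.2 hz).mpr h⟩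
  have hz := dvd_of_mem_hnfLattice h
  exact ⟨hz, (mem_iff_elim_trd hnfLattice_generators_mem.2.2 hz).mp h⟩

theorem dvd_of_mem_hnfLattice_of_trd_eq_zero (hc : 0 < c) {x y : ℤ}
    (h : (x, y, 0) ∈ hnfLattice a b c s u v) : (b : ℤ) ∣ y := by
  obtain ⟨⟨i, j, k⟩, hq⟩ := h
  simp only [hnfMap, LinearMap.coe_mk, AddHom.coe_mk, Prod.mk.injEq] at hq
  obtain ⟨-, rfl, hk⟩ := hq
  obtain rfl : k = 0 := (mul_eq_zero.mp hk).resolve_left (by positivity)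
  exact ⟨j, by ring⟩

theorem mem_hnfLattice_iff_of_snd (hc : 0 < c) {x y : ℤ} :
    (x, y, 0) ∈ hnfLattice a b c s u v ↔
      (b : ℤ) ∣ y ∧ (x - y / b * s, 0, 0) ∈ hnfLattice a b c s u v := by
  refine ⟨fun h ↦ ?_, fun ⟨hy, h⟩ ↦ (mem_iff_elim_snd hnfLattice_generators_mem.2.1 hy).mpr h⟩
  have hy := dvd_of_mem_hnfLattice_of_trd_eq_zero hc h
  exact ⟨hy, (mem_iff_elim_snd hnfLattice_generators_mem.2.1 hy).mp h⟩

theorem mem_hnfLattice_iff_of_fst (hb : 0 < b) (hc : 0 < c) {x : ℤ} :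
    (x, 0, 0) ∈ hnfLattice a b c s u v ↔ (a : ℤ) ∣ x := by
  constructor
  · rintro ⟨⟨i, j, k⟩, hq⟩
    simp only [hnfMap, LinearMap.coe_mk, AddHom.coe_mk, Prod.mk.injEq] at hq
    obtain ⟨rfl, hj, hk⟩ := hq
    obtain rfl : k = 0 := (mul_eq_zero.mp hk).resolve_left (by positivity)
    obtain rfl : j = 0 := by simpa [hb.ne'] using hj
    exact ⟨i, by ring⟩
  · rintro ⟨i, rfl⟩
    convert zsmul_mem hnfLattice_generators_mem.1 i using 1
    ext <;> simp [mul_comm]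

end hnfLattice

theorem dvd_of_hnfLattice_le {a b c s u v a' b' c' s' u' v' : ℕ} (hb : 0 < b) (hc : 0 < c)
    (h : hnfLattice a' b' c' s' u' v' ≤ hnfLattice a b c s u v) : a ∣ a' ∧ b ∣ b' ∧ c ∣ c' := by
  obtain ⟨h₁, h₂, h₃⟩ := hnfLattice_le_iff.mp h
  exact ⟨Int.natCast_dvd_natCast.mp ((mem_hnfLattice_iff_of_fst hb hc).mp h₁),
    Int.natCast_dvd_natCast.mp (dvd_of_mem_hnfLattice_of_trd_eq_zero hc h₂),
    Int.natCast_dvd_natCast.mp (dvd_of_mem_hnfLattice h₃)⟩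

theorem hnfLattice_inj {a b c s u v a' b' c' s' u' v' : ℕ}
    (hb : 0 < b) (hc : 0 < c) (hs : s < a) (hu : u < a) (hv : v < b)
    (hb' : 0 < b') (hc' : 0 < c') (hs' : s' < a') (hu' : u' < a') (hv' : v' < b')
    (h : hnfLattice a b c s u v = hnfLattice a' b' c' s' u' v') :
    a = a' ∧ b = b' ∧ c = c' ∧ s = s' ∧ u = u' ∧ v = v' := by
  obtain ⟨ha₁, hb₁, hc₁⟩ := dvd_of_hnfLattice_le hb hc h.ge
  obtain ⟨ha₂, hb₂, hc₂⟩ := dvd_of_hnfLattice_le hb' hc' h.le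
  obtain rfl := Nat.dvd_antisymm ha₁ ha₂
  obtain rfl := Nat.dvd_antisymm hb₁ hb₂
  obtain rfl := Nat.dvd_antisymm hc₁ hc₂
  obtain ⟨-, h₂, h₃⟩ := hnfLattice_le_iff.mp h.ge
  have hb0 : (b : ℤ) ≠ 0 := by positivity
  have hc0 : (c : ℤ) ≠ 0 := by positivity
  rw [mem_hnfLattice_iff_of_snd hc, Int.ediv_self hb0, one_mul,
    mem_hnfLattice_iff_of_fst hb hc] at h₂
  rw [mem_hnfLattice_iff_of_trd, Int.ediv_self hc0, one_mul, one_mul,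
    mem_hnfLattice_iff_of_snd hc] at h₃
  have hvv := Nat.eq_of_lt_of_lt_of_dvd_sub hv' hv h₃.2.1
  subst hvv
  rw [sub_self, Int.zero_ediv, zero_mul, sub_zero, mem_hnfLattice_iff_of_fst hb hc] at h₃
  exact ⟨rfl, rfl, rfl, (Nat.eq_of_lt_of_lt_of_dvd_sub hs' hs h₂.2).symm,
    (Nat.eq_of_lt_of_lt_of_dvd_sub hu' hu h₃.2.2).symm, rfl⟩

theorem exists_eq_hnfLattice {m n r : ℕ} (hm : 0 < m) (hn : 0 < n) (hr : 0 < r)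
    {L : AddSubgroup (ℤ × ℤ × ℤ)} (hK : hnfLattice m n r 0 0 0 ≤ L) :
    ∃ a b c s u v : ℕ, 0 < b ∧ 0 < c ∧ s < a ∧ u < a ∧ v < b ∧ L = hnfLattice a b c s u v := by
  obtain ⟨hmL, hnL, hrL⟩ := hnfLattice_le_iff.mp hK
  push_cast at hmL hnL hrL
  obtain ⟨c, hc, hcL⟩ : ∃ c : ℕ, 0 < c ∧ ∀ z, (∃ x y, (x, y, z) ∈ L) ↔ (c : ℤ) ∣ z := by
    obtain ⟨c, hc, h⟩ := Int.exists_pos_mem_addSubgroup_iff_dvd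
      (L.map ((AddMonoidHom.snd ℤ ℤ).comp (AddMonoidHom.snd ℤ (ℤ × ℤ))))
      (w := r) (by positivity) ⟨_, hrL, rfl⟩
    exact ⟨c, hc, fun z ↦ by simp [← h]⟩
  obtain ⟨b, hb, hbL⟩ : ∃ b : ℕ, 0 < b ∧ ∀ y, (∃ x, (x, y, 0) ∈ L) ↔ (b : ℤ) ∣ y := by
    obtain ⟨b, hb, h⟩ := Int.exists_pos_mem_addSubgroup_iff_dvd
      ((L.comap ((AddMonoidHom.id ℤ).prodMap (AddMonoidHom.inl ℤ ℤ))).map (AddMonoidHom.snd ℤ ℤ))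
      (w := n) (by positivity) ⟨(0, n), hnL, rfl⟩
    exact ⟨b, hb, fun y ↦ by simp [← h]⟩
  obtain ⟨a, ha, haL⟩ : ∃ a : ℕ, 0 < a ∧ ∀ x, (x, 0, 0) ∈ L ↔ (a : ℤ) ∣ x := by
    obtain ⟨a, ha, h⟩ := Int.exists_pos_mem_addSubgroup_iff_dvd
      (L.comap (AddMonoidHom.inl ℤ (ℤ × ℤ))) (w := m) (by positivity) hmL
    exact ⟨a, ha, h⟩
  have h₁ : ((a : ℤ), 0, 0) ∈ L := (haL a).mpr dvd_rfl
  obtain ⟨x₂, h₂⟩ := (hbL b).mpr dvd_rfl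
  obtain ⟨s, hs, g₂⟩ := exists_fst_lt_mem ha h₁ h₂
  obtain ⟨x₃, y₃, h₃⟩ := (hcL c).mpr dvd_rfl
  obtain ⟨x₃', v, hv, h₃'⟩ := exists_snd_lt_mem hb g₂ h₃
  obtain ⟨u, hu, g₃⟩ := exists_fst_lt_mem ha h₁ h₃'
  refine ⟨a, b, c, s, u, v, hb, hc, hs, hu, hv,
    le_antisymm ?_ (hnfLattice_le_iff.mpr ⟨h₁, g₂, g₃⟩)⟩
  rintro ⟨x, y, z⟩ hp
  have hz : (c : ℤ) ∣ z := (hcL z).mp ⟨x, y, hp⟩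
  rw [mem_iff_elim_trd g₃ hz] at hp
  have hy := (hbL _).mp ⟨_, hp⟩
  rw [mem_iff_elim_snd g₂ hy, haL] at hp
  rw [mem_hnfLattice_iff_of_trd, mem_hnfLattice_iff_of_snd hc, mem_hnfLattice_iff_of_fst hb hc]
  exact ⟨hz, hy, hp⟩

theorem hnfLattice_zero_le_iff {m n r a b c s u v : ℕ} (hb : 0 < b) (hc : 0 < c) :
    hnfLattice m n r 0 0 0 ≤ hnfLattice a b c s u v ↔
      a ∣ m ∧ b ∣ n ∧ a ∣ n / b * s ∧ c ∣ r ∧ b ∣ r / c * v ∧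
        r / c * u ≡ r / c * v / b * s [MOD a] := by
  rw [hnfLattice_le_iff]
  simp only [Nat.cast_zero]
  rw [mem_hnfLattice_iff_of_fst hb hc, mem_hnfLattice_iff_of_snd hc, zero_sub,
    mem_hnfLattice_iff_of_fst hb hc, mem_hnfLattice_iff_of_trd, zero_sub, zero_sub,
    mem_hnfLattice_iff_of_snd hc, mem_hnfLattice_iff_of_fst hb hc]
  simp only [dvd_neg, and_assoc, Nat.modEq_iff_dvd, ← Int.natCast_dvd_natCast]
  push_cast
  refine and_congr_right fun _ ↦ and_congr_right fun _ ↦ and_congr_right fun _ ↦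
    and_congr_right fun _ ↦ and_congr_right fun hv ↦ ?_
  rw [Int.neg_ediv_of_dvd hv, ← dvd_neg, neg_sub, sub_neg_eq_add, neg_mul, ← sub_eq_neg_add]
  exact dvd_sub_comm

theorem AddSubgroup.card_eq_iff_index_eq {G : Type*} [AddGroup G] [Finite G] (V : AddSubgroup G)
    {δ : ℕ} (hδ : δ ∣ Nat.card G) : Nat.card V = δ ↔ V.index = Nat.card G / δ := by
  constructor
  · rintro rfl
    rw [← V.card_mul_index, Nat.mul_div_cancel_left _ Nat.card_pos]
  · intro h
    rw [← Nat.div_div_self hδ Nat.card_pos.ne', ← h, ← V.card_mul_index,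
      Nat.mul_div_cancel _ (Nat.pos_of_ne_zero V.index_ne_zero_of_finite)]

def reduceMod (m n r : ℕ) : ℤ × ℤ × ℤ →+ ZMod m × ZMod n × ZMod r :=
  (Int.castAddHom (ZMod m)).prodMap ((Int.castAddHom (ZMod n)).prodMap (Int.castAddHom (ZMod r)))

section reduceMod

variable {m n r : ℕ}

theorem reduceMod_surjective : Surjective (reduceMod m n r) :=
  ZMod.intCast_surjective.prodMap (ZMod.intCast_surjective.prodMap ZMod.intCast_surjective)

theorem reduceMod_apply (p : ℤ × ℤ × ℤ) :
    reduceMod m n r p = ((p.1 : ZMod m), (p.2.1 : ZMod n), (p.2.2 : ZMod r)) :=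
  rfl

theorem ker_reduceMod : (reduceMod m n r).ker = hnfLattice m n r 0 0 0 := by
  ext ⟨x, y, z⟩
  simp only [AddMonoidHom.mem_ker, reduceMod_apply, Prod.mk_eq_zero,
    ZMod.intCast_zmod_eq_zero_iff_dvd, mem_hnfLattice, hnfMap, LinearMap.coe_mk,
    AddHom.coe_mk, Prod.mk.injEq, Nat.cast_zero, zero_mul, add_zero, Prod.exists]
  constructor
  · rintro ⟨⟨i, rfl⟩, ⟨j, rfl⟩, ⟨k, rfl⟩⟩
    exact ⟨i, j, k, rfl, rfl, rfl⟩
  · rintro ⟨i, j, k, rfl, rfl, rfl⟩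
    exact ⟨⟨i, rfl⟩, ⟨j, rfl⟩, ⟨k, rfl⟩⟩

theorem comap_map_reduceMod {L : AddSubgroup (ℤ × ℤ × ℤ)} (hK : hnfLattice m n r 0 0 0 ≤ L) :
    (L.map (reduceMod m n r)).comap (reduceMod m n r) = L := by
  rw [AddSubgroup.comap_map_eq, ker_reduceMod, sup_eq_left.mpr hK]

end reduceMod

def hnfParams (m n r N : ℕ) : Finset (Σ _ : ℕ × ℕ × ℕ, ℕ × ℕ × ℕ) :=
  {abc ∈ m.divisors ×ˢ n.divisors ×ˢ r.divisors | abc.1 * abc.2.1 * abc.2.2 = N}.sigma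
    fun abc ↦ hnfOffsets abc.1 abc.2.1 (n / abc.2.1) (r / abc.2.2)

def hnfLatticeOfParams (x : Σ _ : ℕ × ℕ × ℕ, ℕ × ℕ × ℕ) : AddSubgroup (ℤ × ℤ × ℤ) :=
  hnfLattice x.1.1 x.1.2.1 x.1.2.2 x.2.1 x.2.2.1 x.2.2.2

section hnfParams

variable {m n r N : ℕ}

theorem card_hnfParams : #(hnfParams m n r N) = ∑ a ∈ m.divisors, ∑ b ∈ n.divisors,
    ∑ c ∈ r.divisors, if a * b * c = N then #(hnfOffsets a b (n / b) (r / c)) else 0 := by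
  rw [hnfParams, card_sigma, sum_filter, sum_product]
  simp_rw [sum_product]

theorem mem_hnfParams (hm : 0 < m) (hn : 0 < n) (hr : 0 < r) {a b c s u v : ℕ} :
    ⟨(a, b, c), (s, u, v)⟩ ∈ hnfParams m n r N ↔ 0 < c ∧ s < a ∧ u < a ∧ v < b ∧
      a * b * c = N ∧ hnfLattice m n r 0 0 0 ≤ hnfLattice a b c s u v := by
  simp only [hnfParams, hnfOffsets, mem_sigma, mem_filter, mem_product, Nat.mem_divisors,
    mem_range]
  constructor
  · rintro ⟨⟨⟨⟨ha, -⟩, ⟨hb, -⟩, ⟨hc, -⟩⟩, habc⟩, ⟨hs, hu, hv⟩, h₁, h₂, h₃⟩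
    have hc0 := Nat.pos_of_dvd_of_pos hc hr
    exact ⟨hc0, hs, hu, hv, habc, (hnfLattice_zero_le_iff (Nat.pos_of_dvd_of_pos hb hn) hc0).mpr
      ⟨ha, hb, h₁, hc, h₂, h₃⟩⟩
  · rintro ⟨hc0, hs, hu, hv, habc, hK⟩
    obtain ⟨ha, hb, h₁, hc, h₂, h₃⟩ := (hnfLattice_zero_le_iff (by omega) hc0).mp hK
    exact ⟨⟨⟨⟨ha, hm.ne'⟩, ⟨hb, hn.ne'⟩, ⟨hc, hr.ne'⟩⟩, habc⟩, ⟨hs, hu, hv⟩, h₁, h₂, h₃⟩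

theorem index_map_hnfLatticeOfParams (hm : 0 < m) (hn : 0 < n) (hr : 0 < r)
    {x : Σ _ : ℕ × ℕ × ℕ, ℕ × ℕ × ℕ} (hx : x ∈ hnfParams m n r N) :
    ((hnfLatticeOfParams x).map (reduceMod m n r)).index = N := by
  obtain ⟨⟨a, b, c⟩, s, u, v⟩ := x
  obtain ⟨hc, hs, -, hv, rfl, hK⟩ := (mem_hnfParams hm hn hr).mp hx
  rw [hnfLatticeOfParams, ← AddSubgroup.index_comap_of_surjective _ reduceMod_surjective,
    comap_map_reduceMod hK]
  exact index_hnfLattice (by omega) (by omega) hc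

theorem card_addSubgroups_index_eq (hm : 0 < m) (hn : 0 < n) (hr : 0 < r) :
    Nat.card {V : AddSubgroup (ZMod m × ZMod n × ZMod r) // V.index = N} =
      #(hnfParams m n r N) := by
  rw [← Nat.card_eq_finsetCard]
  refine (Nat.card_congr (Equiv.ofBijective (fun x ↦ ⟨_, index_map_hnfLatticeOfParams hm hn hr x.2⟩)
    ⟨?_, ?_⟩)).symm
  · rintro ⟨⟨⟨a, b, c⟩, s, u, v⟩, hx⟩ ⟨⟨⟨a', b', c'⟩, s', u', v'⟩, hx'⟩ h
    obtain ⟨hc, hs, hu, hv, -, hK⟩ := (mem_hnfParams hm hn hr).mp hx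
    obtain ⟨hc', hs', hu', hv', -, hK'⟩ := (mem_hnfParams hm hn hr).mp hx'
    have h := congrArg (AddSubgroup.comap (reduceMod m n r) ∘ Subtype.val) h
    simp only [Function.comp, hnfLatticeOfParams, comap_map_reduceMod hK,
      comap_map_reduceMod hK'] at h
    obtain ⟨rfl, rfl, rfl, rfl, rfl, rfl⟩ :=
      hnfLattice_inj (by omega) hc hs hu hv (by omega) hc' hs' hu' hv' h
    rfl
  · rintro ⟨V, hV⟩
    have hK : hnfLattice m n r 0 0 0 ≤ V.comap (reduceMod m n r) := by
      rw [← ker_reduceMod]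
      exact AddMonoidHom.ker_le_comap _ V
    obtain ⟨a, b, c, s, u, v, hb, hc, hs, hu, hv, hL⟩ := exists_eq_hnfLattice hm hn hr hK
    have hN : a * b * c = N := by
      rw [← index_hnfLattice (s := s) (u := u) (v := v) (by omega) hb hc, ← hL,
        AddSubgroup.index_comap_of_surjective _ reduceMod_surjective, hV]
    refine ⟨⟨⟨(a, b, c), (s, u, v)⟩, (mem_hnfParams hm hn hr).mpr ⟨hc, hs, hu, hv, hN, hL ▸ hK⟩⟩,
      Subtype.ext ?_⟩
    change (hnfLattice a b c s u v).map _ = V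
    rw [← hL, AddSubgroup.map_comap_eq_self_of_surjective reduceMod_surjective]

end hnfParams

theorem card_addSubgroups_order_general (m n r : ℕ) (hm : 0 < m) (hn : 0 < n) (hr : 0 < r)
    (δ : ℕ) (hδ : δ ∣ m * n * r) :
    Nat.card {V : AddSubgroup (ZMod m × ZMod n × ZMod r) // Nat.card V = δ} =
      ∑ a ∈ m.divisors, ∑ b ∈ n.divisors, ∑ c ∈ r.divisors,
        if a * b * c = m * n * r / δ then
          (Nat.gcd a (n / b) * Nat.gcd b (r / c) * Nat.gcd a (r / c) /
              (Nat.gcd a (n / b) * Nat.gcd b (r / c) * Nat.gcd a (r / c) /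
                Nat.gcd (a * (r / c))
                  (Nat.gcd a (n / b) * Nat.gcd b (r / c) * Nat.gcd a (r / c))) ^ 2) *
            P (Nat.gcd a (n / b) * Nat.gcd b (r / c) * Nat.gcd a (r / c) /
                Nat.gcd (a * (r / c))
                  (Nat.gcd a (n / b) * Nat.gcd b (r / c) * Nat.gcd a (r / c)))
        else 0 := by
  have : NeZero m := ⟨hm.ne'⟩
  have : NeZero n := ⟨hn.ne'⟩
  have : NeZero r := ⟨hr.ne'⟩
  have hcard : Nat.card (ZMod m × ZMod n × ZMod r) = m * n * r := by
    simp [mul_assoc]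
  rw [Nat.card_congr (Equiv.subtypeEquivRight fun V ↦ V.card_eq_iff_index_eq (hcard ▸ hδ)), hcard,
    card_addSubgroups_index_eq hm hn hr, card_hnfParams]
  refine sum_congr rfl fun a ha ↦ sum_congr rfl fun b hb ↦ sum_congr rfl fun c _ ↦ ?_
  rw [card_hnfOffsets (Nat.pos_of_mem_divisors ha) (Nat.pos_of_mem_divisors hb)]

/-- For `δ ∣ mnr`, the number of subgroups of order `δ` of `ℤ_m × ℤ_n × ℤ_r` equals
`Σ (A·B·C/X²)·P(X)`, the sum over all triples `(a,b,c)` with `a ∣ m`, `b ∣ n`, `c ∣ r`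
and `a·b·c = mnr/δ`, where `A = gcd(a, n/b)`, `B = gcd(b, r/c)`, `C = gcd(a, r/c)` and
`X = ABC / gcd(a·(r/c), ABC)`. -/
theorem card_addSubgroups_order (m n r : ℕ) (hm : 0 < m) (hn : 0 < n) (hr : 0 < r)
    (δ : ℕ) (hδ : δ ∣ m * n * r) (hδpos : 0 < δ) :
    Nat.card {V : AddSubgroup (ZMod m × ZMod n × ZMod r) // Nat.card V = δ} =
      ∑ a ∈ m.divisors, ∑ b ∈ n.divisors, ∑ c ∈ r.divisors,
        if a * b * c = m * n * r / δ then
          (Nat.gcd a (n / b) * Nat.gcd b (r / c) * Nat.gcd a (r / c) /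
              (Nat.gcd a (n / b) * Nat.gcd b (r / c) * Nat.gcd a (r / c) /
                Nat.gcd (a * (r / c))
                  (Nat.gcd a (n / b) * Nat.gcd b (r / c) * Nat.gcd a (r / c))) ^ 2) *
            P (Nat.gcd a (n / b) * Nat.gcd b (r / c) * Nat.gcd a (r / c) /
                Nat.gcd (a * (r / c))
                  (Nat.gcd a (n / b) * Nat.gcd b (r / c) * Nat.gcd a (r / c)))
        else 0 :=
  card_addSubgroups_order_general m n r hm hn hr δ hδ
end

section
/- For every n ∈ ℕ+, s(n) ≤ n²·(τ(n))⁴, where s(n) denotes the total number of subgroups of ℤ_n × ℤ_n × ℤ_n and τ(n) is the number of positive divisors of n. -/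
/-!
Goursat's lemma in asymmetric form: a subgroup `S ≤ C × B` is determined by its projection
`H ≤ C`, its slice `J = {b | (0, b) ∈ S}` and the homomorphism `H → B ⧸ J` whose graph it is,
and `[C × B : S] = [C : H] [B : J]`. For `C`, `B` cyclic there are at most `|H|` homomorphisms
`H → B ⧸ J`, so summing `[C × B : S]` over all subgroups gives at most `|C| |B|` times the
number of pairs `(H, J)`. Applying Goursat to `ℤ_n × ℤ_n²`, where a cyclic `H` has at most
`[ℤ_n² : J]` homomorphisms to `ℤ_n² ⧸ J`, bounds `s(n)` by `τ(n)` times that index sum, hence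
by `n² τ(n)³`: a subgroup of a cyclic group is determined by its order, so `ℤ_n` has at most
`τ(n)` subgroups.
-/

open AddMonoidHom QuotientAddGroup

instance AddMonoidHom.instFinite {G Q : Type*} [AddZeroClass G] [AddZeroClass Q] [Finite G]
    [Finite Q] : Finite (G →+ Q) :=
  Finite.of_injective _ DFunLike.coe_injective

namespace IsAddCyclic

variable {G Q : Type*} [AddGroup G] [IsAddCyclic G]

lemma card_addMonoidHom_le_card_codomain [AddGroup Q] [Finite Q] :
    Nat.card (G →+ Q) ≤ Nat.card Q := by
  obtain ⟨g, hg⟩ := exists_generator (α := G)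
  exact Nat.card_le_card_of_injective (fun φ => φ g) fun φ ψ h =>
    (eq_iff_eq_on_generator hg φ ψ).2 h

lemma card_addMonoidHom_le_card_domain [Finite G] [AddCommGroup Q] [IsAddCyclic Q] [Finite Q] :
    Nat.card (G →+ Q) ≤ Nat.card G := by
  obtain ⟨g, hg⟩ := exists_generator (α := G)
  calc Nat.card (G →+ Q)
      ≤ Nat.card (nsmulAddMonoidHom (Nat.card G) : Q →+ Q).ker :=
        Nat.card_le_card_of_injective
          (fun φ => ⟨φ g, by simp [← map_nsmul, card_nsmul_eq_zero']⟩)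
          fun φ ψ h => (eq_iff_eq_on_generator hg φ ψ).2 (congrArg Subtype.val h)
    _ = (Nat.card Q).gcd (Nat.card G) := card_nsmulAddMonoidHom_ker Q _
    _ ≤ Nat.card G := Nat.gcd_le_right _ Nat.card_pos

variable {G : Type*} [AddCommGroup G] [IsAddCyclic G] [Finite G]

lemma addSubgroup_eq_ker_nsmul_card (H : AddSubgroup G) :
    H = (nsmulAddMonoidHom (Nat.card H) : G →+ G).ker :=
  AddSubgroup.eq_of_le_of_card_ge
    (fun x hx => congrArg Subtype.val (card_nsmul_eq_zero' (x := (⟨x, hx⟩ : H))))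
    (by rw [card_nsmulAddMonoidHom_ker]; exact Nat.gcd_le_right _ Nat.card_pos)

variable (G) in
lemma card_addSubgroup_le_card_divisors :
    Nat.card (AddSubgroup G) ≤ (Nat.card G).divisors.card := by
  calc Nat.card (AddSubgroup G) ≤ Nat.card (Nat.card G).divisors :=
        Nat.card_le_card_of_injective
          (fun H => ⟨Nat.card H, Nat.mem_divisors.2 ⟨H.card_addSubgroup_dvd_card, Nat.card_pos.ne'⟩⟩)
          fun H H' h => by
            rw [addSubgroup_eq_ker_nsmul_card H, addSubgroup_eq_ker_nsmul_card H',
              show Nat.card H = Nat.card H' from congrArg Subtype.val h]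
    _ = (Nat.card G).divisors.card := Nat.card_eq_finsetCard _

end IsAddCyclic

namespace AddSubgroup

variable {C B : Type*} [AddCommGroup C] [AddCommGroup B]

noncomputable def goursatHom (S : AddSubgroup (C × B)) :
    S.map (fst C B) →+ B ⧸ S.goursatSnd :=
  ((fst C B).addSubgroupMap S).liftOfSurjective ((fst C B).addSubgroupMap_surjective S)
    ⟨(mk' S.goursatSnd).comp ((snd C B).comp S.subtype), by
      rintro ⟨⟨c, b⟩, hS⟩ hc
      obtain rfl : c = 0 := congrArg Subtype.val hc
      simpa using hS⟩

lemma goursatHom_apply {S : AddSubgroup (C × B)} {c : C} {b : B} (h : (c, b) ∈ S) :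
    S.goursatHom (⟨c, mem_map_of_mem (fst C B) h⟩ : S.map (fst C B)) = (b : B ⧸ S.goursatSnd) :=
  liftOfRightInverse_comp_apply _ _ _ _ (⟨(c, b), h⟩ : S)

variable (C B) in
abbrev GoursatData := Σ H : AddSubgroup C, Σ J : AddSubgroup B, H →+ B ⧸ J

noncomputable def goursatData (S : AddSubgroup (C × B)) : GoursatData C B :=
  ⟨S.map (fst C B), S.goursatSnd, S.goursatHom⟩

def GoursatData.toAddSubgroup (x : GoursatData C B) : AddSubgroup (C × B) where
  carrier := {p | ∃ h : p.1 ∈ x.1, x.2.2 ⟨p.1, h⟩ = p.2}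
  zero_mem' := ⟨x.1.zero_mem, map_zero x.2.2⟩
  add_mem' := by
    rintro p q ⟨hp, hfp⟩ ⟨hq, hfq⟩
    exact ⟨x.1.add_mem hp hq, (map_add x.2.2 ⟨p.1, hp⟩ ⟨q.1, hq⟩).trans (by rw [hfp, hfq]; rfl)⟩
  neg_mem' := by
    rintro p ⟨hp, hfp⟩
    exact ⟨x.1.neg_mem hp, (map_neg x.2.2 ⟨p.1, hp⟩).trans (by rw [hfp]; rfl)⟩

lemma toAddSubgroup_goursatData (S : AddSubgroup (C × B)) :
    (goursatData S).toAddSubgroup = S := by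
  ext ⟨c, b⟩
  constructor
  · rintro ⟨hc, hφ⟩
    obtain ⟨⟨c, b'⟩, hS, rfl⟩ := mem_map.1 hc
    change S.goursatHom ⟨c, hc⟩ = (b : B ⧸ S.goursatSnd) at hφ
    rw [goursatHom_apply hS, QuotientAddGroup.eq, mem_goursatSnd] at hφ
    simpa using add_mem hS hφ
  · exact fun h => ⟨mem_map_of_mem _ h, goursatHom_apply h⟩

lemma goursatData_injective : Function.Injective (goursatData (C := C) (B := B)) :=
  Function.LeftInverse.injective toAddSubgroup_goursatData

lemma card_eq_card_map_fst_mul_card_goursatSnd (S : AddSubgroup (C × B)) :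
    Nat.card S = Nat.card (S.map (fst C B)) * Nat.card S.goursatSnd := by
  set ψ := (fst C B).addSubgroupMap S
  have hquot : Nat.card (S ⧸ ψ.ker) = Nat.card (S.map (fst C B)) :=
    Nat.card_congr (quotientKerEquivOfSurjective ψ ((fst C B).addSubgroupMap_surjective S)).toEquiv
  have hfst (k : ψ.ker) : k.1.1.1 = 0 := congrArg Subtype.val k.2
  have hker : Nat.card ψ.ker = Nat.card S.goursatSnd := by
    refine Nat.card_congr (Equiv.ofBijective
      (fun k => ⟨k.1.1.2, mem_goursatSnd.2 (by rw [← hfst k]; exact k.1.2)⟩) ⟨?_, ?_⟩)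
    · intro k k' h
      ext
      · rw [hfst, hfst]
      · exact congrArg Subtype.val h
    · intro b
      exact ⟨⟨⟨(0, b), mem_goursatSnd.1 b.2⟩, rfl⟩, rfl⟩
  rw [card_eq_card_quotient_mul_card_addSubgroup ψ.ker, hquot, hker]

lemma index_eq_index_map_fst_mul_index_goursatSnd [Finite C] [Finite B] (S : AddSubgroup (C × B)) :
    S.index = (S.map (fst C B)).index * S.goursatSnd.index := by
  have hS := S.card_mul_index
  rw [Nat.card_prod, card_eq_card_map_fst_mul_card_goursatSnd, ← (S.map (fst C B)).card_mul_index,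
    ← S.goursatSnd.card_mul_index] at hS
  exact Nat.eq_of_mul_eq_mul_left (Nat.mul_pos Nat.card_pos Nat.card_pos) (hS.trans (by ring))

variable [Finite C] [Finite B] [Fintype (AddSubgroup (C × B))] [Fintype (AddSubgroup C)]
  [Fintype (AddSubgroup B)]

lemma sum_goursatData_le (w : AddSubgroup C → AddSubgroup B → ℕ) :
    ∑ S : AddSubgroup (C × B), w (S.map (fst C B)) S.goursatSnd ≤
      ∑ H : AddSubgroup C, ∑ J : AddSubgroup B, Nat.card (H →+ B ⧸ J) * w H J := by
  let _ (H : AddSubgroup C) (J : AddSubgroup B) : Fintype (H →+ B ⧸ J) := Fintype.ofFinite _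
  calc ∑ S : AddSubgroup (C × B), w (S.map (fst C B)) S.goursatSnd
      = ∑ x ∈ Finset.univ.map ⟨goursatData, goursatData_injective⟩, w x.1 x.2.1 := by
        rw [Finset.sum_map]; rfl
    _ ≤ ∑ x : GoursatData C B, w x.1 x.2.1 := Finset.sum_le_sum_of_subset (Finset.subset_univ _)
    _ = ∑ H : AddSubgroup C, ∑ J : AddSubgroup B, Nat.card (H →+ B ⧸ J) * w H J := by
        simp [Fintype.sum_sigma, Nat.card_eq_fintype_card]

lemma card_le_sum_card_addMonoidHom :
    Nat.card (AddSubgroup (C × B)) ≤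
      ∑ H : AddSubgroup C, ∑ J : AddSubgroup B, Nat.card (H →+ B ⧸ J) := by
  simpa [Nat.card_eq_fintype_card] using sum_goursatData_le (C := C) (B := B) fun _ _ => 1

lemma sum_index_le [IsAddCyclic C] [IsAddCyclic B] :
    ∑ S : AddSubgroup (C × B), S.index ≤
      Nat.card (AddSubgroup C) * Nat.card (AddSubgroup B) * (Nat.card C * Nat.card B) := by
  calc ∑ S : AddSubgroup (C × B), S.index
      = ∑ S : AddSubgroup (C × B), (S.map (fst C B)).index * S.goursatSnd.index :=
        Finset.sum_congr rfl fun S _ => index_eq_index_map_fst_mul_index_goursatSnd S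
    _ ≤ ∑ H : AddSubgroup C, ∑ J : AddSubgroup B, Nat.card (H →+ B ⧸ J) * (H.index * J.index) :=
        sum_goursatData_le fun H J => H.index * J.index
    _ ≤ ∑ _H : AddSubgroup C, ∑ _J : AddSubgroup B, Nat.card C * Nat.card B := by
        refine Finset.sum_le_sum fun H _ => Finset.sum_le_sum fun J _ => ?_
        have := isAddCyclic_of_surjective (mk' J) (mk'_surjective J)
        calc Nat.card (H →+ B ⧸ J) * (H.index * J.index)
            ≤ Nat.card H * (H.index * J.index) := by
              gcongr; exact IsAddCyclic.card_addMonoidHom_le_card_domain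
          _ = Nat.card C * J.index := by rw [← mul_assoc, card_mul_index]
          _ ≤ Nat.card C * Nat.card B := by
              gcongr; exact Nat.le_of_dvd Nat.card_pos J.index_dvd_card
    _ = Nat.card (AddSubgroup C) * Nat.card (AddSubgroup B) * (Nat.card C * Nat.card B) := by
        simp [Nat.card_eq_fintype_card, mul_assoc]

end AddSubgroup

/-- For every `n ∈ ℕ+`, the number of subgroups of `ℤ_n × ℤ_n × ℤ_n` is at most
`n²·τ(n)⁴`. -/
theorem card_addSubgroups_le (n : ℕ) (hn : 0 < n) :
    Nat.card (AddSubgroup (ZMod n × ZMod n × ZMod n)) ≤ n ^ 2 * n.divisors.card ^ 4 := by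
  have : NeZero n := ⟨hn.ne'⟩
  set τ := n.divisors.card
  have hτ : Nat.card (AddSubgroup (ZMod n)) ≤ τ := by
    simpa using IsAddCyclic.card_addSubgroup_le_card_divisors (ZMod n)
  have hτ_pos : 0 < τ := Finset.card_pos.2 ⟨n, Nat.mem_divisors_self n hn.ne'⟩
  have hsum : ∑ J : AddSubgroup (ZMod n × ZMod n), J.index ≤ τ * τ * (n * n) := by
    simpa using (AddSubgroup.sum_index_le (C := ZMod n) (B := ZMod n)).trans
      (by rw [Nat.card_zmod]; gcongr)
  calc Nat.card (AddSubgroup (ZMod n × ZMod n × ZMod n))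
      ≤ ∑ H : AddSubgroup (ZMod n), ∑ J : AddSubgroup (ZMod n × ZMod n),
          Nat.card (H →+ (ZMod n × ZMod n) ⧸ J) := AddSubgroup.card_le_sum_card_addMonoidHom
    _ ≤ ∑ _H : AddSubgroup (ZMod n), ∑ J : AddSubgroup (ZMod n × ZMod n), J.index := by
        gcongr; exact IsAddCyclic.card_addMonoidHom_le_card_codomain
    _ = Nat.card (AddSubgroup (ZMod n)) * ∑ J : AddSubgroup (ZMod n × ZMod n), J.index := by
        simp [Nat.card_eq_fintype_card]
    _ ≤ τ * (τ * τ * (n * n)) := by gcongr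
    _ = n ^ 2 * τ ^ 3 := by ring
    _ ≤ n ^ 2 * τ ^ 4 := Nat.mul_le_mul_left _ (Nat.pow_le_pow_right hτ_pos (by norm_num))
end

section
/- The function (m,n,r) ↦ s(m,n,r) counting the subgroups of ℤ_m × ℤ_n × ℤ_r is multiplicative as a function of three variables: for all m₁, n₁, r₁, m₂, n₂, r₂ ∈ ℕ+ with gcd(m₁·n₁·r₁, m₂·n₂·r₂) = 1, one has s(m₁m₂, n₁n₂, r₁r₂) = s(m₁,n₁,r₁)·s(m₂,n₂,r₂). -/
/-!
If the exponents of `A` and `B` are coprime, choose `c ≡ 1` modulo `exp A` and `c ≡ 0` modulo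
`exp B`; multiplication by `c` sends `(a, b)` to `(a, 0)`. So every subgroup of `A × B` contains
the images of its two projections and is therefore their product, which identifies the subgroups
of `A × B` with pairs of subgroups of `A` and of `B`. By the Chinese remainder theorem,
`ℤ_{m₁m₂} × ℤ_{n₁n₂} × ℤ_{r₁r₂}` is the product of `ℤ_{m₁} × ℤ_{n₁} × ℤ_{r₁}` and
`ℤ_{m₂} × ℤ_{n₂} × ℤ_{r₂}`, whose exponents divide `m₁n₁r₁` and `m₂n₂r₂`.
-/

namespace AddSubgroup

variable {A B : Type*} [AddGroup A] [AddGroup B]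

@[simp]
theorem map_fst_prod (H : AddSubgroup A) (K : AddSubgroup B) :
    (H.prod K).map (AddMonoidHom.fst A B) = H := by
  ext a
  simpa [mem_prod] using fun _ => ⟨0, K.zero_mem⟩

@[simp]
theorem map_snd_prod (H : AddSubgroup A) (K : AddSubgroup B) :
    (H.prod K).map (AddMonoidHom.snd A B) = K := by
  ext b
  simpa [mem_prod] using fun _ => ⟨0, H.zero_mem⟩

theorem exists_nsmul_eq_fst_zero_of_coprime_exponent
    (h : (AddMonoid.exponent A).Coprime (AddMonoid.exponent B)) :
    ∃ c : ℕ, ∀ x : A × B, c • x = (x.1, 0) := by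
  obtain ⟨c, hc₁, hc₀⟩ := Nat.chineseRemainder h 1 0
  refine ⟨c, fun x => Prod.ext ?_ ?_⟩
  · rw [Prod.smul_fst, AddMonoid.nsmul_eq_mod_exponent, hc₁, ← AddMonoid.nsmul_eq_mod_exponent,
      one_nsmul]
  · rw [Prod.smul_snd, AddMonoid.nsmul_eq_mod_exponent, hc₀, ← AddMonoid.nsmul_eq_mod_exponent,
      zero_nsmul]

theorem eq_prod_map_fst_map_snd_of_coprime_exponent
    (h : (AddMonoid.exponent A).Coprime (AddMonoid.exponent B)) (K : AddSubgroup (A × B)) :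
    K = (K.map (AddMonoidHom.fst A B)).prod (K.map (AddMonoidHom.snd A B)) := by
  obtain ⟨c, hc⟩ := exists_nsmul_eq_fst_zero_of_coprime_exponent h
  have fst_mem : ∀ x ∈ K, ((x.1, 0) : A × B) ∈ K := fun x hx => hc x ▸ K.nsmul_mem hx c
  refine le_antisymm (le_prod_iff.2 ⟨le_rfl, le_rfl⟩) (prod_le_iff.2 ⟨?_, ?_⟩)
  · rintro _ ⟨_, ⟨x, hx, rfl⟩, rfl⟩
    exact fst_mem x hx
  · rintro _ ⟨_, ⟨x, hx, rfl⟩, rfl⟩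
    show ((0, x.2) : A × B) ∈ K
    rw [show ((0, x.2) : A × B) = x - (x.1, 0) from Prod.ext (sub_self _).symm (sub_zero _).symm]
    exact K.sub_mem hx (fst_mem x hx)

def prodEquivOfCoprimeExponent (h : (AddMonoid.exponent A).Coprime (AddMonoid.exponent B)) :
    AddSubgroup (A × B) ≃ AddSubgroup A × AddSubgroup B where
  toFun K := (K.map (AddMonoidHom.fst A B), K.map (AddMonoidHom.snd A B))
  invFun p := p.1.prod p.2
  left_inv K := (eq_prod_map_fst_map_snd_of_coprime_exponent h K).symm
  right_inv p := by simp

theorem card_prod_of_coprime_exponent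
    (h : (AddMonoid.exponent A).Coprime (AddMonoid.exponent B)) :
    Nat.card (AddSubgroup (A × B)) = Nat.card (AddSubgroup A) * Nat.card (AddSubgroup B) := by
  rw [Nat.card_congr (prodEquivOfCoprimeExponent h), Nat.card_prod]

end AddSubgroup

namespace ZMod

theorem exponent_prod_prod (m n r : ℕ) :
    AddMonoid.exponent (ZMod m × ZMod n × ZMod r) = lcm m (lcm n r) := by
  simp only [AddMonoid.exponent_prod, ZMod.exponent]

def prodProdChineseRemainder {m₁ n₁ r₁ m₂ n₂ r₂ : ℕ} (hm : m₁.Coprime m₂) (hn : n₁.Coprime n₂)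
    (hr : r₁.Coprime r₂) :
    ZMod (m₁ * m₂) × ZMod (n₁ * n₂) × ZMod (r₁ * r₂) ≃+
      (ZMod m₁ × ZMod n₁ × ZMod r₁) × (ZMod m₂ × ZMod n₂ × ZMod r₂) :=
  ((chineseRemainder hm).toAddEquiv.prodCongr
      ((chineseRemainder hn).toAddEquiv.prodCongr (chineseRemainder hr).toAddEquiv)).trans
    (((AddEquiv.refl _).prodCongr (AddEquiv.prodProdProdComm _ _ _ _)).trans
      (AddEquiv.prodProdProdComm _ _ _ _))

end ZMod

theorem card_addSubgroups_multiplicative_general (m₁ n₁ r₁ m₂ n₂ r₂ : ℕ)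
    (hcop : Nat.gcd (m₁ * n₁ * r₁) (m₂ * n₂ * r₂) = 1) :
    Nat.card (AddSubgroup (ZMod (m₁ * m₂) × ZMod (n₁ * n₂) × ZMod (r₁ * r₂))) =
      Nat.card (AddSubgroup (ZMod m₁ × ZMod n₁ × ZMod r₁)) *
        Nat.card (AddSubgroup (ZMod m₂ × ZMod n₂ × ZMod r₂)) := by
  have hcop : (m₁ * n₁ * r₁).Coprime (m₂ * n₂ * r₂) := hcop
  have hm : m₁.Coprime m₂ := hcop.of_dvd (by use n₁ * r₁; ring) (by use n₂ * r₂; ring)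
  have hn : n₁.Coprime n₂ := hcop.of_dvd (by use m₁ * r₁; ring) (by use m₂ * r₂; ring)
  have hr : r₁.Coprime r₂ := hcop.of_dvd (dvd_mul_left _ _) (dvd_mul_left _ _)
  have lcm_dvd_mul (m n r : ℕ) : lcm m (lcm n r) ∣ m * n * r := by
    rw [mul_assoc]
    exact lcm_dvd (dvd_mul_right _ _) ((lcm_dvd_mul n r).trans (dvd_mul_left _ _))
  rw [Nat.card_congr (ZMod.prodProdChineseRemainder hm hn hr).mapAddSubgroup.toEquiv,
    AddSubgroup.card_prod_of_coprime_exponent]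
  rw [ZMod.exponent_prod_prod, ZMod.exponent_prod_prod]
  exact hcop.of_dvd (lcm_dvd_mul _ _ _) (lcm_dvd_mul _ _ _)

/-- The number of subgroups of `ℤ_m × ℤ_n × ℤ_r` is multiplicative as a function of the
three variables: if `gcd(m₁n₁r₁, m₂n₂r₂) = 1` then
`s(m₁m₂, n₁n₂, r₁r₂) = s(m₁,n₁,r₁)·s(m₂,n₂,r₂)`. -/
theorem card_addSubgroups_multiplicative (m₁ n₁ r₁ m₂ n₂ r₂ : ℕ)
    (hm₁ : 0 < m₁) (hn₁ : 0 < n₁) (hr₁ : 0 < r₁)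
    (hm₂ : 0 < m₂) (hn₂ : 0 < n₂) (hr₂ : 0 < r₂)
    (hcop : Nat.gcd (m₁ * n₁ * r₁) (m₂ * n₂ * r₂) = 1) :
    Nat.card (AddSubgroup (ZMod (m₁ * m₂) × ZMod (n₁ * n₂) × ZMod (r₁ * r₂))) =
      Nat.card (AddSubgroup (ZMod m₁ × ZMod n₁ × ZMod r₁)) *
        Nat.card (AddSubgroup (ZMod m₂ × ZMod n₂ × ZMod r₂)) :=
  card_addSubgroups_multiplicative_general m₁ n₁ r₁ m₂ n₂ r₂ hcop
end

section
/- For all m, n, r ∈ ℕ+, the number c(m,n,r) of cyclic subgroups of the group ℤ_m × ℤ_n × ℤ_r is given by c(m,n,r) = Σ_{a ∣ m} Σ_{b ∣ n} Σ_{c ∣ r} φ(a)·φ(b)·φ(c)/φ(lcm(a,b,c)). -/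
/-!
Every element `x` of a finite group generates a cyclic subgroup with exactly
`φ (addOrderOf x)` generators. Sort the cyclic subgroups `V` of `ℤ_m × ℤ_n × ℤ_r` by the orders
`(a, b, c)` of their three projections, which are the orders of the components of any generator
of `V`. The elements with component orders `(a, b, c)` number `φ a * φ b * φ c`, each has order
`lcm a b c`, and they are exactly the generators of the cyclic subgroups of type `(a, b, c)`;
so there are `φ a * φ b * φ c / φ (lcm a b c)` such subgroups.
-/

open Finset AddSubgroup Nat

theorem Nat.card_subtype_eq_sum_card_fiberwise {α ι : Type*} [Finite α] {p : α → Prop}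
    {f : α → ι} {t : Finset ι} (h : ∀ a, p a → f a ∈ t) :
    Nat.card {a // p a} = ∑ i ∈ t, Nat.card {a // p a ∧ f a = i} := by
  classical
  have := Fintype.ofFinite α
  simp only [Nat.card_eq_fintype_card, Fintype.card_subtype]
  rw [card_eq_sum_card_fiberwise fun a ha => h a (mem_filter.1 ha).2]
  simp only [filter_filter]

theorem IsAddCyclic.natCard_addOrderOf_eq_totient {α : Type*} [AddGroup α] [IsAddCyclic α]
    [Finite α] {d : ℕ} (hd : d ∣ Nat.card α) :
    Nat.card {a : α // addOrderOf a = d} = φ d := by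
  classical
  have := Fintype.ofFinite α
  rw [Nat.card_eq_fintype_card, Fintype.card_subtype]
  exact IsAddCyclic.card_addOrderOf_eq_totient (by rwa [← Nat.card_eq_fintype_card])

section Generators

variable {G : Type*} [AddGroup G]

theorem zmultiples_eq_zmultiples_iff_mem_and_addOrderOf_eq {x y : G} (hx : IsOfFinAddOrder x) :
    zmultiples y = zmultiples x ↔ y ∈ zmultiples x ∧ addOrderOf y = addOrderOf x := by
  refine ⟨fun h => ⟨h ▸ mem_zmultiples y, ?_⟩, fun ⟨hy, hord⟩ => ?_⟩
  · rw [← Nat.card_zmultiples, h, Nat.card_zmultiples]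
  · have := hx.finite_zmultiples.to_subtype
    exact eq_of_le_of_card_ge (zmultiples_le_of_mem hy)
      (by rw [Nat.card_zmultiples, Nat.card_zmultiples, hord])

theorem card_zmultiples_eq_zmultiples {x : G} (hx : IsOfFinAddOrder x) :
    Nat.card {y // zmultiples y = zmultiples x} = φ (addOrderOf x) := by
  have := hx.finite_zmultiples.to_subtype
  calc Nat.card {y // zmultiples y = zmultiples x}
      = Nat.card {z : zmultiples x // addOrderOf z = addOrderOf x} :=
        Nat.card_congr <| (Equiv.subtypeEquivRight fun y =>
          zmultiples_eq_zmultiples_iff_mem_and_addOrderOf_eq hx).trans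
          (Equiv.subtypeSubtypeEquivSubtypeInter _ _).symm |>.trans
          (Equiv.subtypeEquivRight fun z => by rw [AddSubgroup.addOrderOf_coe])
    _ = φ (addOrderOf x) :=
        IsAddCyclic.natCard_addOrderOf_eq_totient (by rw [Nat.card_zmultiples])

theorem card_subtype_zmultiples_eq_mul_totient [Finite G] (P : AddSubgroup G → Prop) {d : ℕ}
    (hd : ∀ x, P (zmultiples x) → addOrderOf x = d) :
    Nat.card {x : G // P (zmultiples x)} =
      Nat.card {V : AddSubgroup G // (∃ x, V = zmultiples x) ∧ P V} * φ d := by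
  have hS : {V : AddSubgroup G | (∃ x, V = zmultiples x) ∧ P V}.Finite := Set.toFinite _
  rw [Nat.card_subtype_eq_sum_card_fiberwise (f := zmultiples) (t := hS.toFinset)
      fun x hx => hS.mem_toFinset.2 ⟨⟨x, rfl⟩, hx⟩]
  have hfiber : ∀ V ∈ hS.toFinset,
      Nat.card {y // P (zmultiples y) ∧ zmultiples y = V} = φ d := by
    intro V hV
    obtain ⟨⟨x, rfl⟩, hPx⟩ := hS.mem_toFinset.1 hV
    rw [← hd x hPx, ← card_zmultiples_eq_zmultiples (isOfFinAddOrder_of_finite x)]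
    exact Nat.card_congr <|
      Equiv.subtypeEquivRight fun y => ⟨And.right, fun h => ⟨h ▸ hPx, h⟩⟩
  rw [sum_congr rfl hfiber, sum_const, smul_eq_mul, ← Nat.card_eq_card_finite_toFinset hS]
  rfl

end Generators

section ComponentOrders

variable {A B C : Type*} [AddGroup A] [AddGroup B] [AddGroup C]

noncomputable def componentOrders (V : AddSubgroup (A × B × C)) : ℕ × ℕ × ℕ :=
  (Nat.card (V.map (AddMonoidHom.fst _ _)),
    Nat.card (V.map ((AddMonoidHom.fst _ _).comp (AddMonoidHom.snd _ _))),
    Nat.card (V.map ((AddMonoidHom.snd _ _).comp (AddMonoidHom.snd _ _))))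

theorem componentOrders_zmultiples (x : A × B × C) :
    componentOrders (zmultiples x) = (addOrderOf x.1, addOrderOf x.2.1, addOrderOf x.2.2) := by
  simp only [componentOrders, AddMonoidHom.map_zmultiples, Nat.card_zmultiples]
  rfl

theorem card_cyclic_componentOrders_eq_mul_totient [Finite A] [Finite B] [Finite C]
    (a b c : ℕ) :
    Nat.card {V : AddSubgroup (A × B × C) //
        (∃ x, V = zmultiples x) ∧ componentOrders V = (a, b, c)} * φ (a.lcm (b.lcm c)) =
      Nat.card {u : A // addOrderOf u = a} * Nat.card {v : B // addOrderOf v = b} *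
        Nat.card {w : C // addOrderOf w = c} := by
  rw [← card_subtype_zmultiples_eq_mul_totient (componentOrders · = (a, b, c)) fun x hx => by
    simp only [componentOrders_zmultiples, Prod.mk.injEq] at hx
    rw [Prod.addOrderOf, Prod.addOrderOf, hx.1, hx.2.1, hx.2.2]]
  simp only [componentOrders_zmultiples, Prod.mk.injEq]
  calc _ = Nat.card ({u : A // addOrderOf u = a} × {v : B // addOrderOf v = b} ×
          {w : C // addOrderOf w = c}) :=
        Nat.card_congr <| Equiv.subtypeProdEquivProd.trans
          (Equiv.prodCongrRight fun _ => Equiv.subtypeProdEquivProd)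
    _ = _ := by rw [Nat.card_prod, Nat.card_prod, mul_assoc]

end ComponentOrders

/-- The number of cyclic subgroups of `ℤ_m × ℤ_n × ℤ_r` equals
`Σ_{a ∣ m} Σ_{b ∣ n} Σ_{c ∣ r} φ(a)φ(b)φ(c)/φ(lcm(a,b,c))`. -/
theorem card_cyclic_addSubgroups (m n r : ℕ) (hm : 0 < m) (hn : 0 < n) (hr : 0 < r) :
    Nat.card {V : AddSubgroup (ZMod m × ZMod n × ZMod r) //
        ∃ x : ZMod m × ZMod n × ZMod r, V = AddSubgroup.closure {x}} =
      ∑ a ∈ m.divisors, ∑ b ∈ n.divisors, ∑ c ∈ r.divisors,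
        Nat.totient a * Nat.totient b * Nat.totient c /
          Nat.totient (Nat.lcm a (Nat.lcm b c)) := by
  have : NeZero m := ⟨hm.ne'⟩
  have : NeZero n := ⟨hn.ne'⟩
  have : NeZero r := ⟨hr.ne'⟩
  have hcount : ∀ {k : ℕ} [NeZero k], ∀ a ∈ k.divisors,
      Nat.card {u : ZMod k // addOrderOf u = a} = φ a := fun a ha =>
    IsAddCyclic.natCard_addOrderOf_eq_totient (by rw [Nat.card_zmod]; exact dvd_of_mem_divisors ha)
  have hdvd : ∀ {k : ℕ} [NeZero k] (u : ZMod k), addOrderOf u ∈ k.divisors := fun u =>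
    mem_divisors.2 ⟨by simpa using addOrderOf_dvd_natCard u, NeZero.ne _⟩
  simp_rw [← zmultiples_eq_closure]
  rw [Nat.card_subtype_eq_sum_card_fiberwise (f := componentOrders)
      (t := m.divisors ×ˢ n.divisors ×ˢ r.divisors) ?_, sum_product]
  · refine sum_congr rfl fun a ha => ?_
    rw [sum_product]
    refine sum_congr rfl fun b hb => sum_congr rfl fun c hc => ?_
    rw [← hcount a ha, ← hcount b hb, ← hcount c hc,
      ← card_cyclic_componentOrders_eq_mul_totient, Nat.mul_div_cancel _ (totient_pos.2 ?_)]
    exact Nat.lcm_pos (pos_of_mem_divisors ha)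
      (Nat.lcm_pos (pos_of_mem_divisors hb) (pos_of_mem_divisors hc))
  · rintro _ ⟨x, rfl⟩
    rw [componentOrders_zmultiples]
    exact mem_product.2 ⟨hdvd x.1, mem_product.2 ⟨hdvd x.2.1, hdvd x.2.2⟩⟩
end
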